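/- arXiv:1503.03603 — 3 statements merged into one kernel-verified Lean document; each statement's English description precedes it below -/
import Mathlib

section
/- Let α ∈ ℕ^n and let A = {u_1,…,u_m} be a set of monomials in S = K[x_1,…,x_n] minimal with respect to divisibility. If G is the reduced Gröbner basis of the toric ideal I_{A^α} with respect to a term order < on S_{A^α}, then G ∩ S_A is the reduced Gröbner basis of the toric ideal I_A with respect to the term order induced by < on S_A. -/
/-!
Statement 7: if `G` is the reduced Gröbner basis of the toric ideal `I_{A^α}`
with respect to a term order `<` on `S_{A^α}`, then `G ∩ S_A` is the reduced
Gröbner basis of the toric ideal `I_A` with respect to the term order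
induced by `<` on `S_A`.  Here `S_A` is identified with a subring of
`S_{A^α}` via the inclusion of `A` into `A^α` induced by `x_i ↦ x_{i1}`, and
the induced term order is expressed by the compatibility hypothesis `hcomp`.
-/

open MvPolynomial

/-- `π₀`: sum the exponents over the copies of each variable. -/
def pi0 {σ : Type*} [Fintype σ] (α : σ → ℕ) (w : ((i : σ) × Fin (α i)) → ℕ) : σ → ℕ :=
  fun i => ∑ j : Fin (α i), w ⟨i, j⟩

/-- The expansion of a set of exponent vectors with respect to `α`. -/
def expandSet {σ : Type*} [Fintype σ] (α : σ → ℕ) (B : Set (σ → ℕ)) :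
    Set (((i : σ) × Fin (α i)) → ℕ) := {w | pi0 α w ∈ B}

/-- The `K`-algebra map `S_A → K[x]`, `y_u ↦ x^u`. -/
noncomputable def toricHom (K : Type*) [Field K] {σ : Type*} [Fintype σ] (A : Set (σ → ℕ)) :
    MvPolynomial A K →ₐ[K] MvPolynomial σ K :=
  aeval (fun u : A => monomial (Finsupp.equivFunOnFinite.symm u.1) (1 : K))

/-- The toric ideal of a set of exponent vectors. -/
noncomputable def toricIdeal (K : Type*) [Field K] {σ : Type*} [Fintype σ] (A : Set (σ → ℕ)) :
    Ideal (MvPolynomial A K) :=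
  RingHom.ker (toricHom K A).toRingHom

/-- The leading exponent (multidegree) of a polynomial with respect to a
monomial order. -/
noncomputable def mdeg {σ : Type*} (m : MonomialOrder σ) {K : Type*} [CommSemiring K]
    (f : MvPolynomial σ K) : σ →₀ ℕ :=
  m.toSyn.symm (f.support.sup (fun s => m.toSyn s))

/-- `G` is a Gröbner basis of `I` with respect to the monomial order `m`:
`G ⊆ I` and the leading monomial of every nonzero element of `I` is divisible
by the leading monomial of some element of `G`. -/
def IsGroebnerBasis {σ K : Type*} [Field K] (m : MonomialOrder σ)
    (I : Ideal (MvPolynomial σ K)) (G : Set (MvPolynomial σ K)) : Prop :=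
  G ⊆ (I : Set (MvPolynomial σ K)) ∧
  ∀ f ∈ I, f ≠ 0 → ∃ g ∈ G, g ≠ 0 ∧ mdeg m g ≤ mdeg m f

/-- `G` is the reduced Gröbner basis of `I` w.r.t. `m`: it is a Gröbner basis,
every element is monic, and no monomial occurring in an element of `G` is
divisible by the leading monomial of another element of `G`. -/
def IsReducedGroebnerBasis {σ K : Type*} [Field K] (m : MonomialOrder σ)
    (I : Ideal (MvPolynomial σ K)) (G : Set (MvPolynomial σ K)) : Prop :=
  IsGroebnerBasis m I G ∧
  (∀ g ∈ G, g ≠ 0 ∧ MvPolynomial.coeff (mdeg m g) g = 1) ∧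
  ∀ g ∈ G, ∀ g' ∈ G, g' ≠ g → ∀ s ∈ g.support, ¬ (mdeg m g' ≤ s)

/-- The exponent vector over `S^α` corresponding to `x_i ↦ x_{i1}`. -/
def embVec {σ : Type*} [Fintype σ] [DecidableEq σ] (α : σ → ℕ) (hα : ∀ i, 0 < α i)
    (u : σ → ℕ) : ((i : σ) × Fin (α i)) → ℕ :=
  fun q => if q.2 = (⟨0, hα q.1⟩ : Fin (α q.1)) then u q.1 else 0

lemma pi0_embVec {σ : Type*} [Fintype σ] [DecidableEq σ] (α : σ → ℕ)
    (hα : ∀ i, 0 < α i) (u : σ → ℕ) : pi0 α (embVec α hα u) = u := by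
  funext i
  simp only [pi0, embVec]
  rw [Finset.sum_ite_eq' Finset.univ (⟨0, hα i⟩ : Fin (α i)) (fun _ => u i)]
  simp

/-- The inclusion `A → A^α` induced by `x_i ↦ x_{i1}`. -/
def embA {σ : Type*} [Fintype σ] [DecidableEq σ] (α : σ → ℕ) (hα : ∀ i, 0 < α i)
    (A : Set (σ → ℕ)) : A → expandSet α A :=
  fun u => ⟨embVec α hα u.1, show pi0 α (embVec α hα u.1) ∈ A by
    rw [pi0_embVec]; exact u.2⟩

section Aux

open MvPolynomial

variable {σ : Type*} {K : Type*} [Field K]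

/-- basic mdeg facts -/
lemma toSyn_mdeg (m : MonomialOrder σ) (f : MvPolynomial σ K) :
    m.toSyn (mdeg m f) = f.support.sup (fun s => m.toSyn s) := by
  simp [mdeg]

lemma mdeg_mem_support (m : MonomialOrder σ) {f : MvPolynomial σ K} (hf : f ≠ 0) :
    mdeg m f ∈ f.support := by
  obtain ⟨b, hb, hb'⟩ := Finset.exists_mem_eq_sup f.support
    (MvPolynomial.support_nonempty.mpr hf) (fun s => m.toSyn s)
  rw [mdeg, hb']
  simpa using hb

lemma le_toSyn_mdeg (m : MonomialOrder σ) {f : MvPolynomial σ K} {s : σ →₀ ℕ}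
    (hs : s ∈ f.support) : m.toSyn s ≤ m.toSyn (mdeg m f) := by
  rw [toSyn_mdeg]
  exact Finset.le_sup hs

lemma mdeg_zero (m : MonomialOrder σ) : mdeg m (0 : MvPolynomial σ K) = 0 := by
  simp [mdeg]

end Aux
section Aux2

open MvPolynomial

variable {K : Type*} [Field K]

lemma prod_monomial_one {σ ι : Type*} (t : Finset ι) (h : ι → (σ →₀ ℕ)) :
    (∏ w ∈ t, (monomial (h w) (1 : K))) = monomial (∑ w ∈ t, h w) 1 := by
  classical
  induction t using Finset.cons_induction with
  | empty => simp
  | cons a t ha ih => rw [Finset.prod_cons, Finset.sum_cons, ih, monomial_mul, one_mul]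

/-- The exponent map associated to the toric hom. -/
noncomputable def expE {τ : Type*} [Fintype τ] (A' : Set (τ → ℕ)) (s : ↥A' →₀ ℕ) : τ →₀ ℕ :=
  ∑ w ∈ s.support, s w • Finsupp.equivFunOnFinite.symm (w : τ → ℕ)

lemma expE_apply {τ : Type*} [Fintype τ] (A' : Set (τ → ℕ)) (s : ↥A' →₀ ℕ) (q : τ) :
    expE A' s q = ∑ w ∈ s.support, s w * (w : τ → ℕ) q := by
  rw [expE, Finsupp.finset_sum_apply]
  refine Finset.sum_congr rfl fun w _ => ?_
  simp [Finsupp.coe_equivFunOnFinite_symm]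

lemma toricHom_monomial {τ : Type*} [Fintype τ] (A' : Set (τ → ℕ)) (s : ↥A' →₀ ℕ) (c : K) :
    toricHom K A' (monomial s c) = monomial (expE A' s) c := by
  rw [toricHom, aeval_monomial, algebraMap_eq]
  have : (s.prod fun w e => (monomial (Finsupp.equivFunOnFinite.symm (w : τ → ℕ)) (1 : K)) ^ e)
      = monomial (expE A' s) 1 := by
    rw [Finsupp.prod, expE]
    rw [← prod_monomial_one]
    refine Finset.prod_congr rfl fun w _ => ?_
    rw [monomial_pow, one_pow]
  rw [this, C_mul_monomial, mul_one]

lemma coeff_toricHom {τ : Type*} [Fintype τ] [DecidableEq τ] (A' : Set (τ → ℕ))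
    (f : MvPolynomial ↥A' K) (v : τ →₀ ℕ) :
    coeff v (toricHom K A' f)
      = ∑ s ∈ f.support, if expE A' s = v then coeff s f else 0 := by
  classical
  conv_lhs => rw [f.as_sum, map_sum, coeff_sum]
  refine Finset.sum_congr rfl fun s _ => ?_
  rw [toricHom_monomial, coeff_monomial]

end Aux2
section Aux3

open MvPolynomial

variable {K : Type*} [Field K]
variable {σ : Type*} [Fintype σ] [DecidableEq σ] (α : σ → ℕ) (hα : ∀ i, 0 < α i)
  (A : Set (σ → ℕ))

lemma embA_injective : Function.Injective (embA α hα A) := by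
  intro u v h
  have h1 : embVec α hα u.1 = embVec α hα v.1 := congrArg Subtype.val h
  have h2 := congrArg (pi0 α) h1
  rw [pi0_embVec, pi0_embVec] at h2
  exact Subtype.ext h2

/-- exponents supported on the "first copies" of the variables -/
def goodV (v : ((i : σ) × Fin (α i)) →₀ ℕ) : Prop :=
  ∀ q : (i : σ) × Fin (α i), q.2 ≠ ⟨0, hα q.1⟩ → v q = 0

lemma range_embA_vanish {w : ↥(expandSet α A)} (hw : w ∈ Set.range (embA α hα A))
    (q : (i : σ) × Fin (α i)) (hq : q.2 ≠ ⟨0, hα q.1⟩) : (w : (i : σ) × Fin (α i) → ℕ) q = 0 := by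
  obtain ⟨u, rfl⟩ := hw
  exact if_neg hq

lemma mem_range_embA {w : ↥(expandSet α A)}
    (h : ∀ q : (i : σ) × Fin (α i), q.2 ≠ ⟨0, hα q.1⟩ → (w : (i : σ) × Fin (α i) → ℕ) q = 0) :
    w ∈ Set.range (embA α hα A) := by
  refine ⟨⟨pi0 α w.1, w.2⟩, ?_⟩
  apply Subtype.ext
  funext q
  obtain ⟨i, j⟩ := q
  show (if j = (⟨0, hα i⟩ : Fin (α i)) then pi0 α w.1 i else 0) = w.1 ⟨i, j⟩
  by_cases hj : j = (⟨0, hα i⟩ : Fin (α i))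
  · subst hj
    rw [if_pos rfl, pi0]
    exact Finset.sum_eq_single _ (fun j' _ hj' => h ⟨i, j'⟩ hj') (by simp)
  · rw [if_neg hj]
    exact (h ⟨i, j⟩ hj).symm

lemma goodV_expE_of_range {s : ↥(expandSet α A) →₀ ℕ}
    (hs : ∀ w ∈ s.support, w ∈ Set.range (embA α hα A)) :
    goodV α hα (expE (expandSet α A) s) := by
  intro q hq
  rw [expE_apply]
  refine Finset.sum_eq_zero fun w hw => ?_
  rw [range_embA_vanish α hα A (hs w hw) q hq, mul_zero]

lemma range_of_goodV_expE {s : ↥(expandSet α A) →₀ ℕ}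
    (h : goodV α hα (expE (expandSet α A) s)) :
    ∀ w ∈ s.support, w ∈ Set.range (embA α hα A) := by
  intro w hw
  apply mem_range_embA
  intro q hq
  have h0 := h q hq
  rw [expE_apply] at h0
  have h1 := (Finset.sum_eq_zero_iff.mp h0) w hw
  rcases Nat.mul_eq_zero.mp h1 with h2 | h2
  · exact absurd h2 (Finsupp.mem_support_iff.mp hw)
  · exact h2

/-- the inclusion of variables `x_i ↦ x_{i1}` -/
def emb0 : σ → (i : σ) × Fin (α i) := fun i => ⟨i, ⟨0, hα i⟩⟩

lemma emb0_injective : Function.Injective (emb0 α hα) :=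
  fun a b h => congrArg Sigma.fst h

lemma mapDomain_emb0 (u : σ → ℕ) :
    Finsupp.mapDomain (emb0 α hα) (Finsupp.equivFunOnFinite.symm u)
      = Finsupp.equivFunOnFinite.symm (embVec α hα u) := by
  ext q
  obtain ⟨i, j⟩ := q
  by_cases hj : j = (⟨0, hα i⟩ : Fin (α i))
  · subst hj
    rw [show (⟨i, ⟨0, hα i⟩⟩ : (i : σ) × Fin (α i)) = emb0 α hα i from rfl,
      Finsupp.mapDomain_apply (emb0_injective α hα)]
    simp [Finsupp.coe_equivFunOnFinite_symm, embVec, emb0]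
  · rw [Finsupp.mapDomain_notin_range]
    · simp only [Finsupp.coe_equivFunOnFinite_symm, embVec]
      rw [if_neg hj]
    · rintro ⟨i', hi'⟩
      rw [emb0] at hi'
      obtain ⟨rfl, h2⟩ := Sigma.mk.inj_iff.mp hi'
      exact hj (eq_of_heq h2).symm

lemma toricHom_rename (f : MvPolynomial ↥A K) :
    toricHom K (expandSet α A) (rename (embA α hα A) f)
      = rename (emb0 α hα) (toricHom K A f) := by
  rw [toricHom, aeval_rename, toricHom, comp_aeval_apply]
  have h : ((fun w : ↥(expandSet α A) =>
        monomial (R := K) (Finsupp.equivFunOnFinite.symm (w : (i : σ) × Fin (α i) → ℕ)) 1)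
        ∘ (embA α hα A))
      = fun u : ↥A => rename (emb0 α hα)
          (monomial (R := K) (Finsupp.equivFunOnFinite.symm (u : σ → ℕ)) 1) := by
    funext u
    rw [Function.comp_apply, rename_monomial, mapDomain_emb0]
    rfl
  rw [h]

lemma mem_toricIdeal_iff (f : MvPolynomial ↥A K) :
    f ∈ toricIdeal K A ↔ rename (embA α hα A) f ∈ toricIdeal K (expandSet α A) := by
  simp only [toricIdeal, RingHom.mem_ker, AlgHom.toRingHom_eq_coe, RingHom.coe_coe]
  rw [toricHom_rename]
  constructor
  · intro h; rw [h, map_zero]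
  · intro h
    exact rename_injective (emb0 α hα) (emb0_injective α hα) (by rwa [map_zero])

lemma mapDomain_embA_le_iff (a b : ↥A →₀ ℕ) :
    Finsupp.mapDomain (embA α hα A) a ≤ Finsupp.mapDomain (embA α hα A) b ↔ a ≤ b := by
  constructor
  · intro h
    rw [Finsupp.le_def]
    intro x
    have h1 := Finsupp.le_def.mp h (embA α hα A x)
    rwa [Finsupp.mapDomain_apply (embA_injective α hα A),
      Finsupp.mapDomain_apply (embA_injective α hα A)] at h1
  · intro h
    rw [Finsupp.le_def]
    intro q
    by_cases hq : q ∈ Set.range (embA α hα A)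
    · obtain ⟨x, rfl⟩ := hq
      rw [Finsupp.mapDomain_apply (embA_injective α hα A),
        Finsupp.mapDomain_apply (embA_injective α hα A)]
      exact Finsupp.le_def.mp h x
    · rw [Finsupp.mapDomain_notin_range _ _ hq]
      exact Nat.zero_le _

lemma mdeg_rename (m' : MonomialOrder ↥(expandSet α A)) (m : MonomialOrder ↥A)
    (hcomp : ∀ a b : ↥A →₀ ℕ,
      m.toSyn a ≤ m.toSyn b ↔
        m'.toSyn (Finsupp.mapDomain (embA α hα A) a)
          ≤ m'.toSyn (Finsupp.mapDomain (embA α hα A) b))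
    (f : MvPolynomial ↥A K) :
    mdeg m' (rename (embA α hα A) f) = Finsupp.mapDomain (embA α hα A) (mdeg m f) := by
  classical
  rcases eq_or_ne f 0 with rfl | hf
  · rw [map_zero, mdeg_zero, mdeg_zero, Finsupp.mapDomain_zero]
  · apply m'.toSyn.injective
    rw [toSyn_mdeg, support_rename_of_injective (embA_injective α hα A), Finset.sup_image]
    apply le_antisymm
    · exact Finset.sup_le fun s hs => (hcomp s (mdeg m f)).mp (le_toSyn_mdeg m hs)
    · exact Finset.le_sup (f := (fun s => m'.toSyn s) ∘ Finsupp.mapDomain (embA α hα A))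
        (mdeg_mem_support m hf)

end Aux3
section Aux4

open MvPolynomial

variable {K : Type*} [Field K]
variable {σ : Type*} [Fintype σ] [DecidableEq σ] (α : σ → ℕ) (hα : ∀ i, 0 < α i)
  (A : Set (σ → ℕ))

lemma key_in_range (m' : MonomialOrder ↥(expandSet α A))
    {G : Set (MvPolynomial ↥(expandSet α A) K)}
    (hG : IsReducedGroebnerBasis m' (toricIdeal K (expandSet α A)) G)
    {g' : MvPolynomial ↥(expandSet α A) K} (hg' : g' ∈ G)
    (hsup : ∀ w ∈ (mdeg m' g').support, w ∈ Set.range (embA α hα A)) :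
    ∃ g : MvPolynomial ↥A K, rename (embA α hα A) g = g' := by
  classical
  -- the leading exponent is good
  have hGood_a : goodV α hα (expE (expandSet α A) (mdeg m' g')) :=
    goodV_expE_of_range α hα A hsup
  -- the "bad" part of g'
  set B := g'.support.filter (fun s => ¬ goodV α hα (expE (expandSet α A) s)) with hB
  set gbad : MvPolynomial ↥(expandSet α A) K := ∑ s ∈ B, monomial s (coeff s g') with hgbad
  have hcoeff : ∀ t, coeff t gbad = if t ∈ B then coeff t g' else 0 := by
    intro t
    rw [hgbad, coeff_sum]
    simp only [coeff_monomial]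
    rw [Finset.sum_ite_eq' B t (fun s => coeff s g')]
  -- g' is in the kernel
  have hg'ker : toricHom K (expandSet α A) g' = 0 := by
    have h1 : g' ∈ toricIdeal K (expandSet α A) := hG.1.1 hg'
    simpa only [toricIdeal, RingHom.mem_ker, AlgHom.toRingHom_eq_coe, RingHom.coe_coe] using h1
  -- the bad part is in the kernel
  have hker : toricHom K (expandSet α A) gbad = 0 := by
    apply MvPolynomial.ext
    intro v
    have hfull : ∑ s ∈ g'.support,
        (if expE (expandSet α A) s = v then coeff s g' else 0) = 0 := by
      rw [← coeff_toricHom, hg'ker, coeff_zero]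
    rw [hgbad, map_sum, coeff_sum, coeff_zero]
    simp only [toricHom_monomial, coeff_monomial]
    by_cases hv : goodV α hα v
    · refine Finset.sum_eq_zero fun s hs => ?_
      have hbadS : ¬ goodV α hα (expE (expandSet α A) s) := (Finset.mem_filter.mp hs).2
      rw [if_neg]
      intro hEq
      exact hbadS (hEq ▸ hv)
    · refine (Finset.sum_subset (Finset.filter_subset _ _) ?_).trans hfull
      intro s hs hsB
      have hgoodS : goodV α hα (expE (expandSet α A) s) := by
        by_contra hc
        exact hsB (Finset.mem_filter.mpr ⟨hs, hc⟩)
      rw [if_neg]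
      intro hEq
      exact hv (hEq ▸ hgoodS)
  -- the bad part vanishes
  have hbad0 : gbad = 0 := by
    by_contra h0
    have hIdeal : gbad ∈ toricIdeal K (expandSet α A) := by
      simpa only [toricIdeal, RingHom.mem_ker, AlgHom.toRingHom_eq_coe, RingHom.coe_coe]
        using hker
    obtain ⟨g'', hg''G, hg''ne, hled⟩ := hG.1.2 gbad hIdeal h0
    have hs₀ : mdeg m' gbad ∈ gbad.support := mdeg_mem_support m' h0
    have hs₀B : mdeg m' gbad ∈ B := by
      by_contra hc
      have := hcoeff (mdeg m' gbad)
      rw [if_neg hc] at this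
      exact (Finsupp.mem_support_iff.mp hs₀) this
    have hs₀g' : mdeg m' gbad ∈ g'.support := (Finset.mem_filter.mp hs₀B).1
    have hs₀bad : ¬ goodV α hα (expE (expandSet α A) (mdeg m' gbad)) :=
      (Finset.mem_filter.mp hs₀B).2
    rcases eq_or_ne g'' g' with rfl | hne2
    · have h1 : m'.toSyn (mdeg m' g'') ≤ m'.toSyn (mdeg m' gbad) := m'.toSyn_monotone hled
      have h2 : m'.toSyn (mdeg m' gbad) ≤ m'.toSyn (mdeg m' g'') := le_toSyn_mdeg m' hs₀g'
      have h3 : mdeg m' g'' = mdeg m' gbad := m'.toSyn.injective (le_antisymm h1 h2)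
      exact hs₀bad (h3 ▸ hGood_a)
    · exact hG.2.2 g' hg' g'' hg''G hne2 (mdeg m' gbad) hs₀g' hled
  -- hence all monomials of g' are supported in the range of embA
  have hall : ∀ s ∈ g'.support, ∀ w ∈ s.support, w ∈ Set.range (embA α hα A) := by
    intro s hs
    apply range_of_goodV_expE
    by_contra hc
    have hsB : s ∈ B := Finset.mem_filter.mpr ⟨hs, hc⟩
    have := hcoeff s
    rw [if_pos hsB, hbad0, coeff_zero] at this
    exact (Finsupp.mem_support_iff.mp hs) this.symm
  -- construct the preimage
  refine ⟨rename (fun w : ↥(expandSet α A) => (⟨pi0 α w.1, w.2⟩ : ↥A)) g', ?_⟩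
  rw [rename_rename]
  conv_rhs => rw [g'.as_sum]
  conv_lhs => rw [g'.as_sum, map_sum]
  refine Finset.sum_congr rfl fun s hs => ?_
  rw [rename_monomial]
  congr 1
  have hmap : Finsupp.mapDomain
      ((embA α hα A) ∘ (fun w : ↥(expandSet α A) => (⟨pi0 α w.1, w.2⟩ : ↥A))) s
      = Finsupp.mapDomain id s := by
    apply Finsupp.mapDomain_congr
    intro w hw
    obtain ⟨u, rfl⟩ := hall s hs w hw
    show embA α hα A (⟨pi0 α (embA α hα A u).1, _⟩ : ↥A) = id (embA α hα A u)
    have hu : (⟨pi0 α (embA α hα A u).1, (embA α hα A u).2⟩ : ↥A) = u := by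
      apply Subtype.ext
      exact pi0_embVec α hα u.1
    rw [hu]
    rfl
  rw [hmap, Finsupp.mapDomain_id]

end Aux4

theorem reduced_groebner_basis_restriction
    (n : ℕ) (K : Type*) [Field K] (α : Fin n → ℕ) (hα : ∀ i, 0 < α i)
    (A : Set (Fin n → ℕ)) (hne : A.Nonempty) (hfin : A.Finite)
    (hmin : IsAntichain (· ≤ ·) A)
    (m' : MonomialOrder (expandSet α A)) (m : MonomialOrder A)
    (hcomp : ∀ a b : (A : Type _) →₀ ℕ,
      m.toSyn a ≤ m.toSyn b ↔
        m'.toSyn (Finsupp.mapDomain (embA α hα A) a)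
          ≤ m'.toSyn (Finsupp.mapDomain (embA α hα A) b))
    (G : Set (MvPolynomial (expandSet α A) K))
    (hG : IsReducedGroebnerBasis m' (toricIdeal K (expandSet α A)) G) :
    IsReducedGroebnerBasis m (toricIdeal K A)
      {f : MvPolynomial A K | rename (embA α hα A) f ∈ G} := by
  classical
  obtain ⟨⟨hGsub, hGdiv⟩, hGmonic, hGred⟩ := hG
  have hinj := embA_injective α hα A
  have hrinj : Function.Injective (rename (embA α hα A) :
      MvPolynomial ↥A K → MvPolynomial ↥(expandSet α A) K) :=
    rename_injective _ hinj
  refine ⟨⟨?_, ?_⟩, ?_, ?_⟩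
  · -- the candidate set is contained in the toric ideal
    intro f hf
    exact (mem_toricIdeal_iff α hα A f).mpr (hGsub hf)
  · -- the division property
    intro f hf hf0
    have hRf : rename (embA α hα A) f ∈ toricIdeal K (expandSet α A) :=
      (mem_toricIdeal_iff α hα A f).mp hf
    have hRf0 : rename (embA α hα A) f ≠ 0 := fun h => hf0 (hrinj (by rw [h, map_zero]))
    obtain ⟨g', hg'G, hg'0, hle⟩ := hGdiv _ hRf hRf0
    have hsup : ∀ w ∈ (mdeg m' g').support, w ∈ Set.range (embA α hα A) := by
      intro w hw
      have h1 : mdeg m' g' ≤ Finsupp.mapDomain (embA α hα A) (mdeg m f) := by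
        rw [← mdeg_rename α hα A m' m hcomp]
        exact hle
      have h2 : w ∈ (Finsupp.mapDomain (embA α hα A) (mdeg m f)).support :=
        Finsupp.support_monotone h1 hw
      have h3 := Finsupp.mapDomain_support h2
      obtain ⟨x, _, rfl⟩ := Finset.mem_image.mp h3
      exact ⟨x, rfl⟩
    obtain ⟨g, rfl⟩ := key_in_range α hα A m' ⟨⟨hGsub, hGdiv⟩, hGmonic, hGred⟩ hg'G hsup
    refine ⟨g, hg'G, fun h => hg'0 (by rw [h, map_zero]), ?_⟩
    rw [← mapDomain_embA_le_iff α hα A, ← mdeg_rename α hα A m' m hcomp f,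
      ← mdeg_rename α hα A m' m hcomp g]
    exact hle
  · -- monicity
    intro g hg
    have h := hGmonic _ hg
    refine ⟨fun h0 => h.1 (by rw [h0, map_zero]), ?_⟩
    have h2 := h.2
    rw [mdeg_rename α hα A m' m hcomp, coeff_rename_mapDomain _ hinj] at h2
    exact h2
  · -- reducedness
    intro g hg g2 hg2 hne2 s hs hcon
    have hne' : rename (embA α hα A) g2 ≠ rename (embA α hα A) g := fun h => hne2 (hrinj h)
    have hmem : Finsupp.mapDomain (embA α hα A) s ∈ (rename (embA α hα A) g).support := by
      rw [support_rename_of_injective hinj]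
      exact Finset.mem_image_of_mem _ hs
    have hle' : mdeg m' (rename (embA α hα A) g2) ≤ Finsupp.mapDomain (embA α hα A) s := by
      rw [mdeg_rename α hα A m' m hcomp]
      exact (mapDomain_embA_le_iff α hα A _ _).mpr hcon
    exact hGred _ hg _ hg2 hne' _ hmem hle'
end

section
/- Let α ∈ ℕ^n and let A = {u_1,…,u_m} be a set of monomials in S = K[x_1,…,x_n] minimal with respect to divisibility. Then for all i and j, the graded Betti numbers satisfy β^{K[A]}_{ij}(I_A) ≤ β^{K[A^α]}_{ij}(I_{A^α}). -/
/-!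
Statement 14: for all `i` and `j`, the graded Betti numbers satisfy
`β_{ij}^{S_A}(I_A) ≤ β_{ij}^{S_{A^α}}(I_{A^α})`.  The graded Betti numbers
are encoded via minimal graded free resolutions: a minimal graded free
resolution of a (graded) submodule `M` of `S = K[x_1,…]` consists of graded
free modules `F_i = ⊕_x S(-deg_i(x))` (realised as `Fin (rk i) →₀ S`),
graded differentials whose matrix entries all have vanishing constant term
(minimality), and an augmentation onto `M`, the whole complex being exact.
Then `β_{ij} = #{generators of F_i of degree j}`; by uniqueness of minimal
graded free resolutions this is well defined, so the statement quantifies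
over all minimal graded free resolutions of the two toric ideals.
-/

open MvPolynomial

/-- A minimal graded free resolution of a graded submodule `M ⊆ S`,
`S = MvPolynomial σ K`:  `… → F₁ → F₀ → M → 0` with `F_i` graded free with
`rk i` generators of degrees `deg i`, all differentials having entries with
zero constant term (minimality), and exact. -/
structure MinimalGradedFreeResolution (K : Type*) [Field K] (σ : Type*)
    (M : Submodule (MvPolynomial σ K) (MvPolynomial σ K)) where
  /-- number of generators of the `i`-th free module -/
  rk : ℕ → ℕ
  /-- degrees of the generators of the `i`-th free module -/
  deg : (i : ℕ) → Fin (rk i) → ℕ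
  /-- the differentials -/
  d : (i : ℕ) → (Fin (rk (i + 1)) →₀ MvPolynomial σ K) →ₗ[MvPolynomial σ K]
      (Fin (rk i) →₀ MvPolynomial σ K)
  /-- the augmentation `F₀ → S`, with image `M` -/
  aug : (Fin (rk 0) →₀ MvPolynomial σ K) →ₗ[MvPolynomial σ K] MvPolynomial σ K
  aug_homogeneous : ∀ x, (aug (Finsupp.single x 1)).IsHomogeneous (deg 0 x)
  aug_range : LinearMap.range aug = M
  d_homogeneous : ∀ i x y,
    ((d i (Finsupp.single x 1)) y).IsHomogeneous (deg (i + 1) x - deg i y) ∧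
    (deg (i + 1) x < deg i y → (d i (Finsupp.single x 1)) y = 0)
  minimal : ∀ i x y, MvPolynomial.coeff 0 ((d i (Finsupp.single x 1)) y) = 0
  exact_aug : Function.Exact (d 0) aug
  exact_d : ∀ i, Function.Exact (d (i + 1)) (d i)

/-- The `(i,j)`-th graded Betti number read off from a (minimal) graded free
resolution: the number of generators of `F_i` of degree `j`. -/
def MinimalGradedFreeResolution.betti {K : Type*} [Field K] {σ : Type*}
    {M : Submodule (MvPolynomial σ K) (MvPolynomial σ K)}
    (R : MinimalGradedFreeResolution K σ M) (i j : ℕ) : ℕ :=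
  (Finset.univ.filter (fun x : Fin (R.rk i) => R.deg i x = j)).card

namespace BettiAux
variable {K : Type*} [Field K]

lemma cc_eq_zero_of_isHomogeneous {σ : Type*} {p : MvPolynomial σ K} {n : ℕ}
    (hp : p.IsHomogeneous n) (hn : n ≠ 0) : constantCoeff p = 0 := by
  rw [constantCoeff_eq]
  exact hp.coeff_eq_zero (by simpa using fun h => hn h.symm)

lemma homogeneousComponent_mul_right {σ : Type*} {q : MvPolynomial σ K} {m : ℕ}
    (hq : q.IsHomogeneous m) (t : ℕ) (p : MvPolynomial σ K) :
    homogeneousComponent t (p * q) =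
      if m ≤ t then homogeneousComponent (t - m) p * q else 0 := by
  conv_lhs => rw [← sum_homogeneousComponent p]
  rw [Finset.sum_mul, map_sum]
  have h1 : ∀ k, homogeneousComponent t (homogeneousComponent k p * q) =
      if k = t - m ∧ m ≤ t then homogeneousComponent k p * q else 0 := by
    intro k
    rw [homogeneousComponent_of_mem
      ((mem_homogeneousSubmodule _ _).2
        ((homogeneousComponent_isHomogeneous k p).mul hq))]
    exact if_congr (by constructor <;> (intro h; omega)) rfl rfl
  simp_rw [h1]
  by_cases hm : m ≤ t
  · simp only [hm, and_true]
    rw [Finset.sum_ite_eq' (Finset.range (p.totalDegree + 1)) (t - m)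
      (fun k => homogeneousComponent k p * q)]
    by_cases hr : t - m ∈ Finset.range (p.totalDegree + 1)
    · simp [hr, hm]
    · have : homogeneousComponent (t - m) p = 0 :=
        homogeneousComponent_eq_zero _ _ (by simp only [Finset.mem_range] at hr; omega)
      simp [hr, hm, this]
  · simp [hm]

noncomputable def gradePart {σ : Type*} (j k : ℕ) :
    MvPolynomial σ K →ₗ[K] MvPolynomial σ K :=
  if k ≤ j then homogeneousComponent (j - k) else 0

lemma gradePart_of_le {σ : Type*} {j k : ℕ} (h : k ≤ j) (p : MvPolynomial σ K) :
    gradePart j k p = homogeneousComponent (j - k) p := by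
  rw [gradePart, if_pos h]

lemma gradePart_of_gt {σ : Type*} {j k : ℕ} (h : j < k) (p : MvPolynomial σ K) :
    gradePart j k p = 0 := by
  rw [gradePart, if_neg (by omega)]; rfl

lemma gradePart_mul {σ : Type*} {q : MvPolynomial σ K} {m : ℕ}
    (hq : q.IsHomogeneous m) (j b : ℕ) (p : MvPolynomial σ K) :
    gradePart j b (p * q) = gradePart j (b + m) p * q := by
  by_cases hb : b ≤ j
  · rw [gradePart_of_le hb, homogeneousComponent_mul_right hq]
    by_cases hbm : b + m ≤ j
    · rw [if_pos (show m ≤ j - b by omega), gradePart_of_le hbm,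
        show j - (b + m) = j - b - m from by omega]
    · rw [if_neg (by omega), gradePart_of_gt (by omega), zero_mul]
  · rw [gradePart_of_gt (by omega), gradePart_of_gt (by omega), zero_mul]

/-- Expansion of a linear map on a finite free module in terms of the basis. -/
lemma linearMap_eq_sum {σ : Type*} {r : ℕ} {N : Type*} [AddCommMonoid N]
    [Module (MvPolynomial σ K) N]
    (L : (Fin r →₀ MvPolynomial σ K) →ₗ[MvPolynomial σ K] N)
    (v : Fin r →₀ MvPolynomial σ K) :
    L v = ∑ x, v x • L (Finsupp.single x 1) := by
  have hv : v = ∑ x, Finsupp.single x (v x) := by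
    ext y
    rw [Finsupp.finset_sum_apply]
    simp [Finsupp.single_apply]
  conv_lhs => rw [hv]
  rw [map_sum]
  refine Finset.sum_congr rfl fun x _ => ?_
  rw [← Finsupp.smul_single_one, map_smul]

/-- Application of a "matrix" (given by columns `m`) along a ring hom `Θ`. -/
noncomputable def Tap {σ₁ σ₂ : Type*} (Θ : MvPolynomial σ₁ K →+* MvPolynomial σ₂ K)
    {r : ℕ} {N : Type*} [AddCommMonoid N] [Module (MvPolynomial σ₂ K) N]
    (m : Fin r → N) (v : Fin r →₀ MvPolynomial σ₁ K) : N :=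
  ∑ x, Θ (v x) • m x

variable {σ₁ σ₂ σ₃ : Type*} (Θ : MvPolynomial σ₁ K →+* MvPolynomial σ₂ K)

lemma Tap_def {r : ℕ} {N : Type*} [AddCommMonoid N] [Module (MvPolynomial σ₂ K) N]
    (m : Fin r → N) (v : Fin r →₀ MvPolynomial σ₁ K) :
    Tap Θ m v = ∑ x, Θ (v x) • m x := rfl

lemma Tap_apply {r s : ℕ} (m : Fin r → (Fin s →₀ MvPolynomial σ₂ K))
    (v : Fin r →₀ MvPolynomial σ₁ K) (z : Fin s) :
    Tap Θ m v z = ∑ x, Θ (v x) * m x z := by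
  rw [Tap, Finsupp.finset_sum_apply]
  simp

section N
variable {N : Type*} [AddCommMonoid N] [Module (MvPolynomial σ₂ K) N] {r : ℕ}

lemma Tap_add (m : Fin r → N) (v w : Fin r →₀ MvPolynomial σ₁ K) :
    Tap Θ m (v + w) = Tap Θ m v + Tap Θ m w := by
  simp [Tap, add_smul, Finset.sum_add_distrib]

lemma Tap_zero (m : Fin r → N) : Tap Θ m 0 = 0 := by simp [Tap]

lemma Tap_smul (m : Fin r → N) (c : MvPolynomial σ₁ K) (v : Fin r →₀ MvPolynomial σ₁ K) :
    Tap Θ m (c • v) = Θ c • Tap Θ m v := by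
  simp [Tap, mul_smul, Finset.smul_sum]

lemma Tap_sum (m : Fin r → N) {ι : Type*} (s : Finset ι)
    (g : ι → (Fin r →₀ MvPolynomial σ₁ K)) :
    Tap Θ m (∑ i ∈ s, g i) = ∑ i ∈ s, Tap Θ m (g i) := by
  classical
  induction s using Finset.induction with
  | empty => simp [Tap_zero]
  | insert _ _ hni ih =>
      rw [Finset.sum_insert hni, Finset.sum_insert hni, Tap_add, ih]

lemma Tap_map {N' : Type*} [AddCommMonoid N'] [Module (MvPolynomial σ₂ K) N']
    (L : N →ₗ[MvPolynomial σ₂ K] N') (m : Fin r → N) (v : Fin r →₀ MvPolynomial σ₁ K) :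
    L (Tap Θ m v) = Tap Θ (fun x => L (m x)) v := by
  simp [Tap, map_sum, map_smul]

lemma Tap_linear_expand {r' : ℕ} (m : Fin r → N)
    (L : (Fin r' →₀ MvPolynomial σ₁ K) →ₗ[MvPolynomial σ₁ K] (Fin r →₀ MvPolynomial σ₁ K))
    (v : Fin r' →₀ MvPolynomial σ₁ K) :
    Tap Θ m (L v) = Tap Θ (fun z => Tap Θ m (L (Finsupp.single z 1))) v := by
  conv_lhs => rw [linearMap_eq_sum L v, Tap_sum]
  simp_rw [Tap_smul]
  rfl

lemma Tap_congr (Θ' : MvPolynomial σ₁ K →+* MvPolynomial σ₂ K)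
    (hΘ : ∀ c, Θ c = Θ' c) (m : Fin r → N) (v : Fin r →₀ MvPolynomial σ₁ K) :
    Tap Θ m v = Tap Θ' m v := by
  simp [Tap, hΘ]

lemma Tap_matsub {N' : Type*} [AddCommGroup N'] [Module (MvPolynomial σ₂ K) N']
    (m m' : Fin r → N') (v : Fin r →₀ MvPolynomial σ₁ K) :
    Tap Θ (fun x => m x - m' x) v = Tap Θ m v - Tap Θ m' v := by
  simp [Tap, smul_sub, Finset.sum_sub_distrib]

end N

lemma Tap_ringhom {r : ℕ}
    (L : (Fin r →₀ MvPolynomial σ₁ K) →ₗ[MvPolynomial σ₁ K] MvPolynomial σ₁ K)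
    (v : Fin r →₀ MvPolynomial σ₁ K) :
    Tap Θ (fun z => Θ (L (Finsupp.single z 1))) v = Θ (L v) := by
  conv_rhs => rw [linearMap_eq_sum L v]
  rw [map_sum, Tap]
  refine Finset.sum_congr rfl fun z _ => ?_
  rw [smul_eq_mul, smul_eq_mul, map_mul]

lemma Tap_comp (Θ' : MvPolynomial σ₂ K →+* MvPolynomial σ₃ K)
    {r s : ℕ} {N : Type*} [AddCommMonoid N] [Module (MvPolynomial σ₃ K) N]
    (m : Fin r → (Fin s →₀ MvPolynomial σ₂ K)) (m' : Fin s → N)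
    (v : Fin r →₀ MvPolynomial σ₁ K) :
    Tap Θ' m' (Tap Θ m v) = Tap (Θ'.comp Θ) (fun x => Tap Θ' m' (m x)) v := by
  conv_lhs => rw [Tap_def]
  simp_rw [Tap_apply, map_sum, map_mul, Finset.sum_smul]
  rw [Finset.sum_comm]
  refine Finset.sum_congr rfl fun x _ => ?_
  show _ = (Θ'.comp Θ) (v x) • Tap Θ' m' (m x)
  rw [Tap_def, Finset.smul_sum]
  refine Finset.sum_congr rfl fun z _ => ?_
  rw [RingHom.comp_apply, mul_smul]

section Resolution
variable {σ : Type*} {M : Submodule (MvPolynomial σ K) (MvPolynomial σ K)}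
  (R : MinimalGradedFreeResolution K σ M)

lemma d_cc (i : ℕ) (v : Fin (R.rk (i+1)) →₀ MvPolynomial σ K) (y : Fin (R.rk i)) :
    constantCoeff ((R.d i v) y) = 0 := by
  rw [linearMap_eq_sum (R.d i) v, Finsupp.finset_sum_apply, map_sum]
  refine Finset.sum_eq_zero fun x _ => ?_
  rw [Finsupp.smul_apply, smul_eq_mul, map_mul, constantCoeff_eq, R.minimal i x y, mul_zero]

/-- `v` is an internally homogeneous element of internal degree `j` of the `i`-th
free module. -/
def IHom (i j : ℕ) (v : Fin (R.rk i) →₀ MvPolynomial σ K) : Prop :=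
  ∀ y, ((v y).IsHomogeneous (j - R.deg i y)) ∧ (j < R.deg i y → v y = 0)

lemma IHom_zero (i j : ℕ) : IHom R i j 0 := by
  intro y
  exact ⟨by simpa using isHomogeneous_zero _ _ _, fun _ => rfl⟩

lemma IHom_d_single (i : ℕ) (x : Fin (R.rk (i+1))) :
    IHom R i (R.deg (i+1) x) (R.d i (Finsupp.single x 1)) :=
  fun y => R.d_homogeneous i x y

/-- Projection onto the internal degree `j` part. -/
noncomputable def compC (i j : ℕ) (v : Fin (R.rk i) →₀ MvPolynomial σ K) :
    Fin (R.rk i) →₀ MvPolynomial σ K :=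
  Finsupp.onFinset v.support (fun y => gradePart j (R.deg i y) (v y))
    (fun y h => Finsupp.mem_support_iff.2 (fun h0 => h (by
      show gradePart j (R.deg i y) (v y) = 0
      rw [h0, map_zero])))

lemma compC_apply (i j : ℕ) (v : Fin (R.rk i) →₀ MvPolynomial σ K) (y : Fin (R.rk i)) :
    compC R i j v y = gradePart j (R.deg i y) (v y) := rfl

lemma d_compC (i j : ℕ) (v : Fin (R.rk (i+1)) →₀ MvPolynomial σ K) :
    R.d i (compC R (i+1) j v) = compC R i j (R.d i v) := by
  refine Finsupp.ext fun y => ?_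
  rw [compC_apply, linearMap_eq_sum (R.d i) (compC R (i+1) j v), Finsupp.finset_sum_apply,
    linearMap_eq_sum (R.d i) v, Finsupp.finset_sum_apply]
  simp only [map_sum]
  refine Finset.sum_congr rfl fun x _ => ?_
  rw [Finsupp.smul_apply, Finsupp.smul_apply, smul_eq_mul, smul_eq_mul, compC_apply]
  obtain ⟨hE, hE0⟩ := R.d_homogeneous i x y
  by_cases hab : R.deg i y ≤ R.deg (i+1) x
  · rw [gradePart_mul hE, show R.deg i y + (R.deg (i+1) x - R.deg i y) = R.deg (i+1) x
      from by omega]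
  · rw [hE0 (by omega), mul_zero, mul_zero, map_zero]

lemma aug_compC (j : ℕ) (v : Fin (R.rk 0) →₀ MvPolynomial σ K) :
    R.aug (compC R 0 j v) = homogeneousComponent j (R.aug v) := by
  rw [linearMap_eq_sum R.aug (compC R 0 j v), linearMap_eq_sum R.aug v, map_sum]
  refine Finset.sum_congr rfl fun y _ => ?_
  rw [smul_eq_mul, smul_eq_mul, compC_apply]
  have hA := R.aug_homogeneous y
  have h0 : homogeneousComponent j ((v y) * R.aug (Finsupp.single y 1)) =
      gradePart j 0 ((v y) * R.aug (Finsupp.single y 1)) := by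
    rw [gradePart_of_le (Nat.zero_le j), Nat.sub_zero]
  rw [h0, gradePart_mul hA, Nat.zero_add]

lemma compC_of_IHom {i j : ℕ} {v : Fin (R.rk i) →₀ MvPolynomial σ K}
    (h : IHom R i j v) : compC R i j v = v := by
  refine Finsupp.ext fun y => ?_
  rw [compC_apply]
  by_cases hd : R.deg i y ≤ j
  · rw [gradePart_of_le hd,
      homogeneousComponent_of_mem ((mem_homogeneousSubmodule _ _).2 (h y).1), if_pos rfl]
  · rw [gradePart_of_gt (by omega), (h y).2 (by omega)]

lemma IHom_compC (i j : ℕ) (v : Fin (R.rk i) →₀ MvPolynomial σ K) :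
    IHom R i j (compC R i j v) := by
  intro y
  constructor
  · by_cases hd : R.deg i y ≤ j
    · rw [compC_apply, gradePart_of_le hd]
      exact homogeneousComponent_isHomogeneous _ _
    · rw [compC_apply, gradePart_of_gt (by omega)]
      exact isHomogeneous_zero _ _ _
  · intro hlt
    rw [compC_apply, gradePart_of_gt hlt]

end Resolution

section TwoResolutions
variable {σ₁ σ₂ : Type*} {M₁ : Submodule (MvPolynomial σ₁ K) (MvPolynomial σ₁ K)}
  {M₂ : Submodule (MvPolynomial σ₂ K) (MvPolynomial σ₂ K)}
  (R : MinimalGradedFreeResolution K σ₁ M₁) (R' : MinimalGradedFreeResolution K σ₂ M₂)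
  (Θ : MvPolynomial σ₁ K →+* MvPolynomial σ₂ K)

lemma IHom_Tap (hΘ : ∀ (p : MvPolynomial σ₁ K) (k : ℕ), p.IsHomogeneous k →
      (Θ p).IsHomogeneous k)
    {i j : ℕ} {m : Fin (R.rk i) → (Fin (R'.rk i) →₀ MvPolynomial σ₂ K)}
    (hm : ∀ x, IHom R' i (R.deg i x) (m x))
    {v : Fin (R.rk i) →₀ MvPolynomial σ₁ K} (hv : IHom R i j v) :
    IHom R' i j (Tap Θ m v) := by
  intro z
  constructor
  · rw [Tap_apply]
    refine IsHomogeneous.sum _ _ _ fun x _ => ?_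
    by_cases h1 : j < R.deg i x
    · rw [(hv x).2 h1, map_zero, zero_mul]
      exact isHomogeneous_zero _ _ _
    by_cases h2 : R.deg i x < R'.deg i z
    · rw [(hm x z).2 h2, mul_zero]
      exact isHomogeneous_zero _ _ _
    · have hmul := (hΘ _ _ (hv x).1).mul (hm x z).1
      rwa [show j - R.deg i x + (R.deg i x - R'.deg i z) = j - R'.deg i z
        from by omega] at hmul
  · intro hz
    rw [Tap_apply]
    refine Finset.sum_eq_zero fun x _ => ?_
    by_cases h2 : R.deg i x < R'.deg i z
    · rw [(hm x z).2 h2, mul_zero]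
    · rw [(hv x).2 (by omega), map_zero, zero_mul]

end TwoResolutions
section Lift
variable {σ₁ σ₂ : Type*} {M₁ : Submodule (MvPolynomial σ₁ K) (MvPolynomial σ₁ K)}
  {M₂ : Submodule (MvPolynomial σ₂ K) (MvPolynomial σ₂ K)}
  (R : MinimalGradedFreeResolution K σ₁ M₁) (R' : MinimalGradedFreeResolution K σ₂ M₂)
  (Θ : MvPolynomial σ₁ K →+* MvPolynomial σ₂ K)

/-- Push the augmentation through `Tap` when the base compatibility holds. -/
lemma aug_Tap {f0 : Fin (R.rk 0) → (Fin (R'.rk 0) →₀ MvPolynomial σ₂ K)}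
    (hb : ∀ z, R'.aug (f0 z) = Θ (R.aug (Finsupp.single z 1)))
    (v : Fin (R.rk 0) →₀ MvPolynomial σ₁ K) :
    R'.aug (Tap Θ f0 v) = Θ (R.aug v) := by
  rw [Tap_map Θ R'.aug f0 v]
  simp_rw [hb]
  exact Tap_ringhom Θ R.aug v

/-- Push a differential through `Tap` when the link at level `k` holds. -/
lemma d_Tap {k : ℕ}
    {fk : Fin (R.rk k) → (Fin (R'.rk k) →₀ MvPolynomial σ₂ K)}
    {fk1 : Fin (R.rk (k+1)) → (Fin (R'.rk (k+1)) →₀ MvPolynomial σ₂ K)}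
    (hl : ∀ z, R'.d k (fk1 z) = Tap Θ fk (R.d k (Finsupp.single z 1)))
    (v : Fin (R.rk (k+1)) →₀ MvPolynomial σ₁ K) :
    R'.d k (Tap Θ fk1 v) = Tap Θ fk (R.d k v) := by
  rw [Tap_map Θ (R'.d k) fk1 v]
  simp_rw [hl]
  rw [← Tap_linear_expand]

lemma lift_exists
    (hΘh : ∀ (p : MvPolynomial σ₁ K) (k : ℕ), p.IsHomogeneous k → (Θ p).IsHomogeneous k)
    (hΘM : ∀ p ∈ M₁, Θ p ∈ M₂) (N : ℕ) :
    ∃ f : ∀ k, Fin (R.rk k) → (Fin (R'.rk k) →₀ MvPolynomial σ₂ K),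
      (∀ k x, IHom R' k (R.deg k x) (f k x)) ∧
      (∀ x, R'.aug (f 0 x) = Θ (R.aug (Finsupp.single x 1))) ∧
      (∀ k, k < N → ∀ x, R'.d k (f (k+1) x) =
        Tap Θ (f k) (R.d k (Finsupp.single x 1))) := by
  classical
  induction N with
  | zero =>
      have hmem : ∀ x : Fin (R.rk 0),
          ∃ w, R'.aug w = Θ (R.aug (Finsupp.single x 1)) := by
        intro x
        have h1 : Θ (R.aug (Finsupp.single x 1)) ∈ M₂ := by
          refine hΘM _ ?_
          have h2 : R.aug (Finsupp.single x 1) ∈ LinearMap.range R.aug :=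
            LinearMap.mem_range_self _ _
          rwa [R.aug_range] at h2
        rw [← R'.aug_range] at h1
        exact h1
      choose w hw using hmem
      refine ⟨fun k => Nat.casesOn k (fun x => compC R' 0 (R.deg 0 x) (w x))
        (fun _ _ => 0), ?_, ?_, ?_⟩
      · intro k x
        cases k with
        | zero => exact IHom_compC R' 0 (R.deg 0 x) (w x)
        | succ k => exact IHom_zero R' (k+1) (R.deg (k+1) x)
      · intro x
        show R'.aug (compC R' 0 (R.deg 0 x) (w x)) = _
        rw [aug_compC, hw x,
          homogeneousComponent_of_mem ((mem_homogeneousSubmodule _ _).2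
            (hΘh _ _ (R.aug_homogeneous x))), if_pos rfl]
      · intro k hk
        omega
  | succ N ih =>
      obtain ⟨f, hg, hb, hl⟩ := ih
      -- the target column at level N+1
      set t : Fin (R.rk (N+1)) → (Fin (R'.rk N) →₀ MvPolynomial σ₂ K) :=
        fun x => Tap Θ (f N) (R.d N (Finsupp.single x 1)) with ht
      have htI : ∀ x, IHom R' N (R.deg (N+1) x) (t x) := by
        intro x
        exact IHom_Tap R R' Θ hΘh (fun x' => hg N x') (IHom_d_single R N x)
      have hrange : ∀ x, ∃ w, R'.d N w = t x := by
        intro x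
        cases N with
        | zero =>
            have h0 : R'.aug (t x) = 0 := by
              rw [ht, aug_Tap R R' Θ hb,
                (R.exact_aug.apply_apply_eq_zero (Finsupp.single x 1) : R.aug _ = 0),
                map_zero]
            exact (R'.exact_aug (t x)).mp h0
        | succ M =>
            have h0 : R'.d M (t x) = 0 := by
              rw [ht, d_Tap R R' Θ (fun z => hl M (by omega) z),
                (R.exact_d M |>.apply_apply_eq_zero (Finsupp.single x 1) :
                  R.d M _ = 0), Tap_zero]
            exact (R'.exact_d M (t x)).mp h0
      choose w hw using hrange
      set newcol : Fin (R.rk (N+1)) → (Fin (R'.rk (N+1)) →₀ MvPolynomial σ₂ K) :=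
        fun x => compC R' (N+1) (R.deg (N+1) x) (w x) with hnew
      have hdnew : ∀ x, R'.d N (newcol x) = t x := by
        intro x
        rw [hnew, d_compC, hw x, compC_of_IHom R' (htI x)]
      refine ⟨Function.update f (N+1) newcol, ?_, ?_, ?_⟩
      · intro k x
        rcases eq_or_ne k (N+1) with rfl | hne
        · rw [Function.update_self]
          exact IHom_compC R' (N+1) (R.deg (N+1) x) (w x)
        · rw [Function.update_of_ne hne]
          exact hg k x
      · intro x
        rw [Function.update_of_ne (by omega : (0:ℕ) ≠ N+1)]
        exact hb x
      · intro k hk x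
        rcases eq_or_ne k N with rfl | hne
        · rw [Function.update_self, Function.update_of_ne (by omega : k ≠ k+1)]
          exact hdnew x
        · rw [Function.update_of_ne (by omega : k+1 ≠ N+1),
            Function.update_of_ne (by omega : k ≠ N+1)]
          exact hl k (by omega) x

end Lift
section Htpy
variable {σ : Type*} {M : Submodule (MvPolynomial σ K) (MvPolynomial σ K)}
  (R : MinimalGradedFreeResolution K σ M)

lemma Tap_id_single {r : ℕ} (w : Fin r →₀ MvPolynomial σ K) :
    Tap (RingHom.id (MvPolynomial σ K)) (fun z => (Finsupp.single z 1 :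
      Fin r →₀ MvPolynomial σ K)) w = w := by
  have h := linearMap_eq_sum (LinearMap.id :
    (Fin r →₀ MvPolynomial σ K) →ₗ[MvPolynomial σ K] (Fin r →₀ MvPolynomial σ K)) w
  simp only [LinearMap.id_coe, id_eq] at h
  rw [Tap_def]
  exact h.symm

lemma htpy_exists (N : ℕ)
    (g : ∀ k, Fin (R.rk k) → (Fin (R.rk k) →₀ MvPolynomial σ K))
    (hgb : ∀ x, R.aug (g 0 x) = R.aug (Finsupp.single x 1))
    (hgl : ∀ k, k < N → ∀ x, R.d k (g (k+1) x) =
      Tap (RingHom.id (MvPolynomial σ K)) (g k) (R.d k (Finsupp.single x 1))) :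
    ∃ h : ∀ k, Fin (R.rk k) → (Fin (R.rk (k+1)) →₀ MvPolynomial σ K),
      (∀ x, g 0 x - Finsupp.single x 1 = R.d 0 (h 0 x)) ∧
      (∀ k, k < N → ∀ x, g (k+1) x - Finsupp.single x 1 =
        R.d (k+1) (h (k+1) x) +
          Tap (RingHom.id (MvPolynomial σ K)) (h k) (R.d k (Finsupp.single x 1))) := by
  classical
  induction N with
  | zero =>
      have hmem : ∀ x : Fin (R.rk 0), ∃ u, R.d 0 u = g 0 x - Finsupp.single x 1 := by
        intro x
        refine (R.exact_aug _).mp ?_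
        rw [map_sub, hgb x, sub_self]
      choose u hu using hmem
      exact ⟨fun k => Nat.casesOn k u (fun _ _ => 0), fun x => (hu x).symm,
        fun k hk => by omega⟩
  | succ N ih =>
      obtain ⟨h, h0, hl⟩ := ih (fun k hk => hgl k (by omega))
      have hker : ∀ x : Fin (R.rk (N+1)), R.d N (g (N+1) x - Finsupp.single x 1 -
          Tap (RingHom.id (MvPolynomial σ K)) (h N) (R.d N (Finsupp.single x 1))) = 0 := by
        intro x
        rw [map_sub, map_sub, hgl N (by omega) x,
          Tap_map (RingHom.id (MvPolynomial σ K)) (R.d N) (h N)]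
        cases N with
        | zero =>
            have hdh : ∀ z, R.d 0 (h 0 z) = g 0 z - Finsupp.single z 1 :=
              fun z => (h0 z).symm
            simp_rw [hdh]
            rw [Tap_matsub, Tap_id_single]
            abel
        | succ M =>
            have hdh : ∀ z, R.d (M+1) (h (M+1) z) =
                g (M+1) z - Finsupp.single z 1 -
                  Tap (RingHom.id (MvPolynomial σ K)) (h M)
                    (R.d M (Finsupp.single z 1)) := by
              intro z
              rw [hl M (by omega) z]
              abel
            simp_rw [hdh]
            rw [Tap_matsub, Tap_matsub, Tap_id_single]
            have hTze : Tap (RingHom.id (MvPolynomial σ K))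
                (fun z => Tap (RingHom.id (MvPolynomial σ K)) (h M)
                  (R.d M (Finsupp.single z 1))) (R.d (M+1) (Finsupp.single x 1)) =
                Tap (RingHom.id (MvPolynomial σ K)) (h M)
                  (R.d M (R.d (M+1) (Finsupp.single x 1))) :=
              (Tap_linear_expand _ _ (R.d M) _).symm
            rw [hTze,
              (R.exact_d M |>.apply_apply_eq_zero (Finsupp.single x 1) :
                R.d M (R.d (M+1) _) = 0), Tap_zero]
            abel
      have hmem : ∀ x : Fin (R.rk (N+1)), ∃ c, R.d (N+1) c =
          g (N+1) x - Finsupp.single x 1 -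
            Tap (RingHom.id (MvPolynomial σ K)) (h N) (R.d N (Finsupp.single x 1)) :=
        fun x => (R.exact_d N _).mp (hker x)
      choose c hc using hmem
      refine ⟨Function.update h (N+1) c, ?_, ?_⟩
      · intro x
        rw [Function.update_of_ne (by omega : (0:ℕ) ≠ N+1)]
        exact h0 x
      · intro k hk x
        rcases eq_or_ne k N with rfl | hne
        · rw [Function.update_self, Function.update_of_ne (by omega : k ≠ k+1), hc x]
          abel
        · rw [Function.update_of_ne (by omega : k+1 ≠ N+1),
            Function.update_of_ne (by omega : k ≠ N+1)]
          exact hl k (by omega) x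

end Htpy
section Toric
variable (n : ℕ) (α : Fin n → ℕ)

def iotaFun (u : Fin n → ℕ) : ((i : Fin n) × Fin (α i)) → ℕ :=
  fun p => if p.2.val = 0 then u p.1 else 0

lemma pi0_iotaFun (hα : ∀ i, 0 < α i) (u : Fin n → ℕ) :
    pi0 α (iotaFun n α u) = u := by
  funext i
  show (∑ j : Fin (α i), if (j : ℕ) = 0 then u i else 0) = u i
  have h1 : ∀ j : Fin (α i), (if (j : ℕ) = 0 then u i else 0) =
      if j = (⟨0, hα i⟩ : Fin (α i)) then u i else 0 := by
    intro j
    exact if_congr (by simp [Fin.ext_iff]) rfl rfl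
  simp_rw [h1]
  rw [Finset.sum_ite_eq' Finset.univ (⟨0, hα i⟩ : Fin (α i)) (fun _ => u i)]
  simp

variable (A : Set (Fin n → ℕ))

def iotaA (hα : ∀ i, 0 < α i) (u : ↥A) : ↥(expandSet α A) :=
  ⟨iotaFun n α u.1, show pi0 α _ ∈ A by rw [pi0_iotaFun n α hα]; exact u.2⟩

def piA (w : ↥(expandSet α A)) : ↥A := ⟨pi0 α w.1, w.2⟩

lemma piA_iotaA (hα : ∀ i, 0 < α i) (u : ↥A) :
    piA n α A (iotaA n α A hα u) = u :=
  Subtype.ext (pi0_iotaFun n α hα u.1)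

lemma mapDomain_efun (hα : ∀ i, 0 < α i) (u : Fin n → ℕ) :
    Finsupp.mapDomain (fun i : Fin n => (⟨i, ⟨0, hα i⟩⟩ : (i : Fin n) × Fin (α i)))
      (Finsupp.equivFunOnFinite.symm u) =
      Finsupp.equivFunOnFinite.symm (iotaFun n α u) := by
  classical
  have hinj : Function.Injective
      (fun i : Fin n => (⟨i, ⟨0, hα i⟩⟩ : (i : Fin n) × Fin (α i))) := by
    intro a b hab
    simpa using congrArg Sigma.fst hab
  ext p
  obtain ⟨i, j⟩ := p
  rw [show (Finsupp.equivFunOnFinite.symm (iotaFun n α u)) ⟨i, j⟩ =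
    iotaFun n α u ⟨i, j⟩ from rfl]
  by_cases hj : (j : ℕ) = 0
  · have hjj : j = ⟨0, hα i⟩ := by
      rw [Fin.ext_iff]
      exact hj
    rw [hjj]
    rw [show (⟨i, ⟨0, hα i⟩⟩ : (i : Fin n) × Fin (α i)) =
      (fun i : Fin n => (⟨i, ⟨0, hα i⟩⟩ : (i : Fin n) × Fin (α i))) i from rfl,
      Finsupp.mapDomain_apply hinj]
    rw [show iotaFun n α u ⟨i, ⟨0, hα i⟩⟩ = u i from rfl]
    rfl
  · rw [Finsupp.mapDomain_notin_range]
    · rw [show iotaFun n α u ⟨i, j⟩ = if (j : ℕ) = 0 then u i else 0 from rfl,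
        if_neg hj]
    · rintro ⟨i', heq⟩
      simp only [] at heq
      cases heq
      simp at hj

lemma mapDomain_fst (w : ((i : Fin n) × Fin (α i)) → ℕ) :
    Finsupp.mapDomain (Sigma.fst) (Finsupp.equivFunOnFinite.symm w) =
      Finsupp.equivFunOnFinite.symm (pi0 α w) := by
  classical
  ext i
  rw [show (Finsupp.equivFunOnFinite.symm (pi0 α w)) i = pi0 α w i from rfl]
  rw [Finsupp.mapDomain, Finsupp.sum_fintype _ _ (fun _ => Finsupp.single_zero _),
    Finsupp.finset_sum_apply]
  simp only [Finsupp.coe_equivFunOnFinite_symm, Finsupp.single_apply]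
  rw [← Finset.univ_sigma_univ, Finset.sum_sigma]
  have h2 : ∀ i' : Fin n, (∑ j : Fin (α i'),
      if (⟨i', j⟩ : (i : Fin n) × Fin (α i)).fst = i then w ⟨i', j⟩ else 0) =
      if i' = i then (∑ j : Fin (α i'), w ⟨i', j⟩) else 0 := by
    intro i'
    by_cases hii : i' = i
    · simp [hii]
    · simp [hii]
  simp_rw [h2]
  rw [Finset.sum_ite_eq' Finset.univ i (fun i' => ∑ j : Fin (α i'), w ⟨i', j⟩)]
  simp [pi0]

lemma toric_square_iota (hα : ∀ i, 0 < α i) (p : MvPolynomial ↥A K) :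
    toricHom K (expandSet α A) (rename (iotaA n α A hα) p) =
      rename (fun i : Fin n => (⟨i, ⟨0, hα i⟩⟩ : (i : Fin n) × Fin (α i)))
        (toricHom K A p) := by
  rw [toricHom, aeval_rename, toricHom, comp_aeval_apply]
  refine congrArg (fun F => aeval F p) (funext fun u => ?_)
  show monomial (Finsupp.equivFunOnFinite.symm (iotaFun n α u.1)) (1:K) =
    rename _ (monomial (Finsupp.equivFunOnFinite.symm u.1) 1)
  rw [rename_monomial, mapDomain_efun n α hα]

lemma toric_square_pi (q : MvPolynomial ↥(expandSet α A) K) :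
    toricHom K A (rename (piA n α A) q) =
      rename (Sigma.fst) (toricHom K (expandSet α A) q) := by
  rw [toricHom, aeval_rename, toricHom, comp_aeval_apply]
  refine congrArg (fun F => aeval F q) (funext fun w => ?_)
  show monomial (Finsupp.equivFunOnFinite.symm (pi0 α w.1)) (1:K) =
    rename _ (monomial (Finsupp.equivFunOnFinite.symm w.1) 1)
  rw [rename_monomial, mapDomain_fst n α]

lemma toricIdeal_iota (hα : ∀ i, 0 < α i) {p : MvPolynomial ↥A K}
    (hp : p ∈ toricIdeal K A) :
    rename (iotaA n α A hα) p ∈ toricIdeal K (expandSet α A) := by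
  have h0 : toricHom K A p = 0 := by
    simpa [toricIdeal, RingHom.mem_ker] using hp
  have h1 : toricHom K (expandSet α A) (rename (iotaA n α A hα) p) = 0 := by
    rw [toric_square_iota n α A hα p, h0, map_zero]
  simpa [toricIdeal, RingHom.mem_ker] using h1

lemma toricIdeal_pi {q : MvPolynomial ↥(expandSet α A) K}
    (hq : q ∈ toricIdeal K (expandSet α A)) :
    rename (piA n α A) q ∈ toricIdeal K A := by
  have h0 : toricHom K (expandSet α A) q = 0 := by
    simpa [toricIdeal, RingHom.mem_ker] using hq
  have h1 : toricHom K A (rename (piA n α A) q) = 0 := by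
    rw [toric_square_pi n α A q, h0, map_zero]
  simpa [toricIdeal, RingHom.mem_ker] using h1

lemma psi_phi (hα : ∀ i, 0 < α i) (p : MvPolynomial ↥A K) :
    rename (piA n α A) (rename (iotaA n α A hα) p) = p := by
  rw [rename_rename,
    show (piA n α A) ∘ (iotaA n α A hα) = id from funext fun u => piA_iotaA n α A hα u,
    rename_id, AlgHom.id_apply]

end Toric

section CardLemma
variable {K : Type*} [Field K]

lemma card_le_of_factor {r₁ r₂ : ℕ} (deg₁ : Fin r₁ → ℕ) (deg₂ : Fin r₂ → ℕ) (j : ℕ)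
    (P : Fin r₁ → Fin r₂ → K) (Q : Fin r₂ → Fin r₁ → K)
    (hP : ∀ x z, P x z ≠ 0 → deg₁ x = deg₂ z)
    (hPQ : ∀ x y, (∑ z, P x z * Q z y) = if x = y then (1:K) else 0) :
    (Finset.univ.filter fun x : Fin r₁ => deg₁ x = j).card ≤
      (Finset.univ.filter fun z : Fin r₂ => deg₂ z = j).card := by
  classical
  let M₁ : Matrix {x : Fin r₁ // deg₁ x = j} {z : Fin r₂ // deg₂ z = j} K :=
    fun x z => P x.1 z.1
  let M₂ : Matrix {z : Fin r₂ // deg₂ z = j} {x : Fin r₁ // deg₁ x = j} K :=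
    fun z y => Q z.1 y.1
  have hmul : M₁ * M₂ = 1 := by
    ext x y
    rw [Matrix.mul_apply]
    have hsum : (∑ z : {z : Fin r₂ // deg₂ z = j}, P x.1 z.1 * Q z.1 y.1) =
        ∑ z : Fin r₂, P x.1 z * Q z y.1 := by
      rw [← Finset.sum_filter_add_sum_filter_not Finset.univ
        (fun z : Fin r₂ => deg₂ z = j) (fun z => P x.1 z * Q z y.1)]
      have hz : (∑ z ∈ Finset.univ.filter (fun z : Fin r₂ => ¬ deg₂ z = j),
          P x.1 z * Q z y.1) = 0 := by
        refine Finset.sum_eq_zero fun z hz => ?_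
        rcases eq_or_ne (P x.1 z) 0 with h | h
        · rw [h, zero_mul]
        · have hdz : deg₂ z = j := by rw [← hP x.1 z h]; exact x.2
          exact absurd hdz (Finset.mem_filter.1 hz).2
      rw [hz, add_zero]
      exact (Finset.sum_subtype (Finset.univ.filter fun z : Fin r₂ => deg₂ z = j)
        (fun z => by simp) (fun z => P x.1 z * Q z y.1)).symm
    show (∑ z : {z : Fin r₂ // deg₂ z = j}, P x.1 z.1 * Q z.1 y.1) =
      (1 : Matrix {x : Fin r₁ // deg₁ x = j} {x : Fin r₁ // deg₁ x = j} K) x y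
    rw [hsum, hPQ x.1 y.1, Matrix.one_apply]
    exact if_congr Subtype.coe_inj rfl rfl
  have hcard : Fintype.card {x : Fin r₁ // deg₁ x = j} ≤
      Fintype.card {z : Fin r₂ // deg₂ z = j} := by
    have h1 : (M₁ * M₂).rank = Fintype.card {x : Fin r₁ // deg₁ x = j} := by
      rw [hmul, Matrix.rank_one]
    have h2 := Matrix.rank_mul_le_left M₁ M₂
    have h3 := Matrix.rank_le_card_width M₁
    omega
  rw [← Fintype.card_subtype, ← Fintype.card_subtype]
  exact hcard

end CardLemma
end BettiAux

open BettiAux in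
theorem betti_le_expansion_betti
    (n : ℕ) (K : Type*) [Field K] (α : Fin n → ℕ) (hα : ∀ i, 0 < α i)
    (A : Set (Fin n → ℕ)) (hne : A.Nonempty) (hfin : A.Finite)
    (hmin : IsAntichain (· ≤ ·) A)
    (d : ℕ) (hd : ∀ u ∈ A, ∑ j, u j = d)
    (R₁ : MinimalGradedFreeResolution K A (toricIdeal K A))
    (R₂ : MinimalGradedFreeResolution K (expandSet α A)
      (toricIdeal K (expandSet α A))) :
    ∀ i j, R₁.betti i j ≤ R₂.betti i j := by
  classical
  intro i j
  -- the two ring homomorphisms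
  set Φ : MvPolynomial ↥A K →+* MvPolynomial ↥(expandSet α A) K :=
    (rename (iotaA n α A hα)).toRingHom with hΦdef
  set Ψ : MvPolynomial ↥(expandSet α A) K →+* MvPolynomial ↥A K :=
    (rename (piA n α A)).toRingHom with hΨdef
  have hΨΦ : ∀ c : MvPolynomial ↥A K, Ψ (Φ c) = c := fun c => psi_phi n α A hα c
  -- graded chain lifts in both directions
  obtain ⟨f, hfg, hfb, hfl⟩ := lift_exists R₁ R₂ Φ
    (fun p k hk => hk.rename_isHomogeneous)
    (fun p hp => toricIdeal_iota n α A hα hp) (i+1)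
  obtain ⟨m, hmg, hmb, hml⟩ := lift_exists R₂ R₁ Ψ
    (fun p k hk => hk.rename_isHomogeneous)
    (fun p hp => toricIdeal_pi n α A hp) (i+1)
  -- the composite chain self-map of R₁
  set g : ∀ k, Fin (R₁.rk k) → (Fin (R₁.rk k) →₀ MvPolynomial ↥A K) :=
    fun k x => Tap Ψ (m k) (f k x) with hgdef
  have hgb : ∀ x, R₁.aug (g 0 x) = R₁.aug (Finsupp.single x 1) := by
    intro x
    show R₁.aug (Tap Ψ (m 0) (f 0 x)) = _
    rw [aug_Tap R₂ R₁ Ψ hmb (f 0 x), hfb x]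
    exact hΨΦ _
  have hgl : ∀ k, k < i+1 → ∀ x, R₁.d k (g (k+1) x) =
      Tap (RingHom.id (MvPolynomial ↥A K)) (g k) (R₁.d k (Finsupp.single x 1)) := by
    intro k hk x
    show R₁.d k (Tap Ψ (m (k+1)) (f (k+1) x)) = _
    rw [d_Tap R₂ R₁ Ψ (fun z => hml k hk z) (f (k+1) x), hfl k hk x,
      Tap_comp Φ Ψ (f k) (m k) (R₁.d k (Finsupp.single x 1))]
    exact Tap_congr _ _ (fun c => by rw [RingHom.comp_apply, hΨΦ c, RingHom.id_apply]) _ _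
  -- homotopy between the composite and the identity
  obtain ⟨h, hh0, hhl⟩ := htpy_exists R₁ (i+1) g hgb hgl
  -- the composite is the identity modulo the maximal ideal
  have hdelta : ∀ x y, constantCoeff ((g i x) y) = if x = y then (1:K) else 0 := by
    intro x y
    have hsx : constantCoeff (((Finsupp.single x (1 : MvPolynomial ↥A K)) :
        Fin (R₁.rk i) →₀ MvPolynomial ↥A K) y) = if x = y then (1:K) else 0 := by
      rw [Finsupp.single_apply]
      split <;> simp
    cases i with
    | zero =>
        have hident : g 0 x = Finsupp.single x 1 + R₁.d 0 (h 0 x) := by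
          rw [← hh0 x]; abel
        rw [hident, Finsupp.add_apply, map_add, d_cc, add_zero, hsx]
    | succ k =>
        have hident : g (k+1) x = Finsupp.single x 1 + (R₁.d (k+1) (h (k+1) x) +
            Tap (RingHom.id (MvPolynomial ↥A K)) (h k) (R₁.d k (Finsupp.single x 1))) := by
          rw [← hhl k (by omega) x]; abel
        have hT : constantCoeff ((Tap (RingHom.id (MvPolynomial ↥A K)) (h k)
            (R₁.d k (Finsupp.single x 1))) y) = 0 := by
          rw [Tap_apply, map_sum]
          refine Finset.sum_eq_zero fun z _ => ?_
          rw [RingHom.id_apply, map_mul, d_cc, zero_mul]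
        rw [hident, Finsupp.add_apply, Finsupp.add_apply, map_add, map_add, d_cc, hT,
          add_zero, add_zero, hsx]
  -- the constant-term matrices
  have hPQ : ∀ x y, (∑ z, constantCoeff ((f i x) z) * constantCoeff ((m i z) y)) =
      if x = y then (1:K) else 0 := by
    intro x y
    rw [← hdelta x y]
    show _ = constantCoeff ((Tap Ψ (m i) (f i x)) y)
    rw [Tap_apply, map_sum]
    refine Finset.sum_congr rfl fun z _ => ?_
    rw [map_mul]
    congr 1
    exact (constantCoeff_rename (piA n α A) ((f i x) z)).symm
  have hP : ∀ x z, constantCoeff ((f i x) z) ≠ 0 → R₁.deg i x = R₂.deg i z := by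
    intro x z hne
    obtain ⟨h1, h2⟩ := hfg i x z
    have hle : ¬ (R₁.deg i x < R₂.deg i z) := fun hlt => hne (by rw [h2 hlt, map_zero])
    have h0 : R₁.deg i x - R₂.deg i z = 0 := by
      by_contra hpos
      exact hne (cc_eq_zero_of_isHomogeneous h1 hpos)
    omega
  exact card_le_of_factor (R₁.deg i) (R₂.deg i) j
    (fun x z => constantCoeff ((f i x) z)) (fun z y => constantCoeff ((m i z) y))
    hP hPQ
end

section
/- Let α ∈ ℕ^n and let A = {u_1,…,u_m} be a set of monomials in S = K[x_1,…,x_n] minimal with respect to divisibility such that K[A] is a homogeneous K-algebra. Then reg(K[A]) ≤ reg(K[A^α]), where reg denotes Castelnuovo–Mumford regularity of K[A] as a graded module over the polynomial ring S_A (respectively of K[A^α] over S_{A^α}). -/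
/-!
Statement 18: `reg K[A] ≤ reg K[A^α]`, where the Castelnuovo–Mumford
regularity of `K[A] = S_A / I_A` as a graded module over the polynomial ring
`S_A` is `reg = max{j − i : β_{ij} ≠ 0}`.  The graded Betti numbers are read
off from a minimal graded free resolution of the quotient `S_A / I_A` (they
are well defined by uniqueness of minimal resolutions), so the statement
quantifies over all minimal graded free resolutions of the two quotients and
asserts that for every nonzero `β_{ij}` of `K[A]` there is a nonzero Betti
number `β_{i'j'}` of `K[A^α]` with `j − i ≤ j' − i'`.
-/

open MvPolynomial

set_option maxHeartbeats 2000000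
set_option synthInstance.maxHeartbeats 400000

/-- A minimal graded free resolution `… → F₁ → F₀ → S/I → 0` of the cyclic
graded module `S ⧸ I`, `S = MvPolynomial σ K`.  `F_i` is graded free with
`rk i` generators of degrees `deg i`; minimality means that all matrix
entries of the differentials have zero constant term. -/
structure MinimalGradedFreeResolutionOfQuotient (K : Type*) [Field K] (σ : Type*)
    (I : Ideal (MvPolynomial σ K)) where
  /-- number of generators of the `i`-th free module -/
  rk : ℕ → ℕ
  /-- degrees of the generators of the `i`-th free module -/
  deg : (i : ℕ) → Fin (rk i) → ℕ
  /-- the differentials -/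
  d : (i : ℕ) → (Fin (rk (i + 1)) →₀ MvPolynomial σ K) →ₗ[MvPolynomial σ K]
      (Fin (rk i) →₀ MvPolynomial σ K)
  /-- the augmentation `F₀ → S ⧸ I` -/
  aug : (Fin (rk 0) →₀ MvPolynomial σ K) →ₗ[MvPolynomial σ K]
      (MvPolynomial σ K ⧸ I)
  aug_homogeneous : ∀ x, ∃ p : MvPolynomial σ K,
    p.IsHomogeneous (deg 0 x) ∧ Ideal.Quotient.mk I p = aug (Finsupp.single x 1)
  aug_surjective : Function.Surjective aug
  d_homogeneous : ∀ i x y,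
    ((d i (Finsupp.single x 1)) y).IsHomogeneous (deg (i + 1) x - deg i y) ∧
    (deg (i + 1) x < deg i y → (d i (Finsupp.single x 1)) y = 0)
  minimal : ∀ i x y, MvPolynomial.coeff 0 ((d i (Finsupp.single x 1)) y) = 0
  exact_aug : Function.Exact (d 0) aug
  exact_d : ∀ i, Function.Exact (d (i + 1)) (d i)

/-- The `(i,j)`-th graded Betti number read off from a resolution. -/
def MinimalGradedFreeResolutionOfQuotient.betti {K : Type*} [Field K] {σ : Type*}
    {I : Ideal (MvPolynomial σ K)}
    (R : MinimalGradedFreeResolutionOfQuotient K σ I) (i j : ℕ) : ℕ :=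
  (Finset.univ.filter (fun x : Fin (R.rk i) => R.deg i x = j)).card


set_option maxHeartbeats 1000000 in
set_option synthInstance.maxHeartbeats 400000 in
theorem nat_rec_exists {C : ℕ → Type*} {Inv : ∀ i, C i → Prop}
    {L : ∀ i, C i → C (i+1) → Prop}
    (h0 : ∃ c, Inv 0 c)
    (hs : ∀ i c, Inv i c → ∃ c', Inv (i+1) c' ∧ L i c c') :
    ∃ f : ∀ i, C i, Inv 0 (f 0) ∧ ∀ i, Inv (i+1) (f (i+1)) ∧ L i (f i) (f (i+1)) := by
  classical
  let g : ∀ i, {c : C i // Inv i c} := fun i => Nat.rec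
    ⟨Classical.choose h0, Classical.choose_spec h0⟩
    (fun i prev => ⟨Classical.choose (hs i prev.1 prev.2),
      (Classical.choose_spec (hs i prev.1 prev.2)).1⟩) i
  refine ⟨fun i => (g i).1, (g 0).2, fun i => ⟨(g (i+1)).2, ?_⟩⟩
  exact (Classical.choose_spec (hs i (g i).1 (g i).2)).2

section helpers
variable {K : Type*} [Field K] {σ : Type*} {m m' : ℕ}

theorem lin_eq_sum {N : Type*} [AddCommMonoid N] [Module (MvPolynomial σ K) N]
    (L : (Fin m →₀ MvPolynomial σ K) →ₗ[MvPolynomial σ K] N) (v : Fin m →₀ MvPolynomial σ K) :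
    L v = ∑ y : Fin m, (v y) • L (Finsupp.single y 1) := by
  have hv : v = ∑ y : Fin m, (v y) • Finsupp.single y (1 : MvPolynomial σ K) := by
    ext z
    simp [Finsupp.finset_sum_apply, Finsupp.single_apply]
  calc L v = L (∑ y : Fin m, (v y) • Finsupp.single y 1) := by rw [← hv]
    _ = _ := by rw [map_sum]; exact Finset.sum_congr rfl fun y _ => by rw [map_smul]

theorem sum_single_eq (v : Fin m →₀ MvPolynomial σ K) :
    (∑ y : Fin m, (v y) • Finsupp.single y (1 : MvPolynomial σ K)) = v := by
  ext z
  simp [Finsupp.finset_sum_apply, Finsupp.single_apply]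

theorem double_swap {S : Type*} [CommSemiring S] {M : Type*} [AddCommMonoid M] [Module S M]
    {a b : ℕ} (c : Fin a → S) (t : Fin a → Fin b → S) (W : Fin b → M) :
    ∑ y' : Fin b, (∑ y : Fin a, c y * t y y') • W y'
      = ∑ y : Fin a, c y • ∑ y' : Fin b, t y y' • W y' := by
  have h1 : ∀ y' : Fin b, (∑ y : Fin a, c y * t y y') • W y'
      = ∑ y : Fin a, (c y * t y y') • W y' := fun y' => Finset.sum_smul
  rw [Finset.sum_congr rfl fun y' _ => h1 y', Finset.sum_comm]
  refine Finset.sum_congr rfl fun y _ => ?_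
  rw [Finset.smul_sum]
  exact Finset.sum_congr rfl fun y' _ => by rw [smul_smul]

theorem coord_sum (W : Fin m → (Fin m' →₀ MvPolynomial σ K)) (c : Fin m → MvPolynomial σ K)
    (z : Fin m') :
    (∑ y : Fin m, c y • W y) z = ∑ y : Fin m, c y * (W y z) := by
  simp [Finsupp.finset_sum_apply]

theorem quot_smul {I : Ideal (MvPolynomial σ K)} (a b : MvPolynomial σ K) :
    a • (Ideal.Quotient.mk I b) = Ideal.Quotient.mk I (a * b) :=
  (Submodule.Quotient.mk_smul I a b).symm

end helpers


theorem hc_of_homog {K : Type*} [Field K] {σ : Type*} {p : MvPolynomial σ K} {n d : ℕ}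
    (h : p.IsHomogeneous n) :
    MvPolynomial.homogeneousComponent d p = if d = n then p else 0 :=
  MvPolynomial.homogeneousComponent_of_mem h

theorem hc_mul {K : Type*} [Field K] {σ : Type*} {e : MvPolynomial σ K} {δ : ℕ}
    (he : e.IsHomogeneous δ) (v : MvPolynomial σ K) (n : ℕ) :
    MvPolynomial.homogeneousComponent n (v * e) =
      if δ ≤ n then (MvPolynomial.homogeneousComponent (n - δ) v) * e else 0 := by
  conv_lhs => rw [← MvPolynomial.sum_homogeneousComponent v]
  rw [Finset.sum_mul, map_sum]
  have hterm : ∀ k, MvPolynomial.homogeneousComponent n ((MvPolynomial.homogeneousComponent k v) * e) =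
      if n = k + δ then (MvPolynomial.homogeneousComponent k v) * e else 0 := fun k =>
    hc_of_homog ((MvPolynomial.homogeneousComponent_isHomogeneous k v).mul he)
  simp only [hterm]
  by_cases hδ : δ ≤ n
  · rw [if_pos hδ, Finset.sum_eq_single (n - δ)]
    · rw [if_pos (by omega)]
    · intro b _ hb; rw [if_neg (by omega)]
    · intro h
      rw [if_pos (by omega), MvPolynomial.homogeneousComponent_eq_zero, zero_mul]
      simp only [Finset.mem_range] at h; omega
  · rw [if_neg hδ]
    exact Finset.sum_eq_zero fun b _ => if_neg (by omega)

namespace MinimalGradedFreeResolutionOfQuotient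
variable {K : Type*} [Field K] {σ : Type*} {I : Ideal (MvPolynomial σ K)}
variable (R : MinimalGradedFreeResolutionOfQuotient K σ I)

theorem cc_coord_d (i : ℕ) (v : Fin (R.rk (i+1)) →₀ MvPolynomial σ K) (y : Fin (R.rk i)) :
    constantCoeff ((R.d i v) y) = 0 := by
  rw [lin_eq_sum (R.d i) v, Finsupp.finset_sum_apply, map_sum]
  refine Finset.sum_eq_zero fun x _ => ?_
  rw [Finsupp.smul_apply, smul_eq_mul, map_mul]
  have := R.minimal i x y
  simp only [MvPolynomial.constantCoeff_eq] at this ⊢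
  rw [this, mul_zero]

theorem coord_d (i : ℕ) (v : Fin (R.rk (i+1)) →₀ MvPolynomial σ K) (y : Fin (R.rk i)) :
    (R.d i v) y = ∑ x, v x * ((R.d i (Finsupp.single x 1)) y) := by
  rw [lin_eq_sum (R.d i) v, coord_sum]

theorem d_d (i : ℕ) (w : Fin (R.rk (i+2)) →₀ MvPolynomial σ K) :
    R.d i (R.d (i+1) w) = 0 :=
  (R.exact_d i).apply_apply_eq_zero w

theorem aug_d (w : Fin (R.rk 1) →₀ MvPolynomial σ K) : R.aug (R.d 0 w) = 0 :=
  R.exact_aug.apply_apply_eq_zero w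

theorem rk_desc {k : ℕ} (hk : R.rk (k+1) ≠ 0) : R.rk k ≠ 0 := by
  intro h0
  have x : Fin (R.rk (k+1)) := ⟨0, Nat.pos_of_ne_zero hk⟩
  have hz : R.d k (Finsupp.single x 1) = 0 := by
    ext y; exact absurd y.2 (by omega)
  obtain ⟨w, hw⟩ := (R.exact_d k (Finsupp.single x 1)).mp hz
  have h1 : constantCoeff ((R.d (k+1) w) x) = 0 := R.cc_coord_d _ _ _
  rw [hw] at h1
  simp at h1

theorem rk_zero_ne {i : ℕ} (hi : R.rk i ≠ 0) : R.rk 0 ≠ 0 := by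
  induction i with
  | zero => exact hi
  | succ n ih => exact ih (R.rk_desc hi)

theorem degen {t : MvPolynomial σ K} (ht : t ∈ I) (hcc : constantCoeff t ≠ 0)
    {i : ℕ} (hi : R.rk i ≠ 0) : False := by
  have h0 : R.rk 0 ≠ 0 := R.rk_zero_ne hi
  have x0 : Fin (R.rk 0) := ⟨0, Nat.pos_of_ne_zero h0⟩
  set v : Fin (R.rk 0) →₀ MvPolynomial σ K := t • Finsupp.single x0 1 with hv
  have haug : R.aug v = 0 := by
    rw [hv, map_smul]
    obtain ⟨b, hb⟩ := Ideal.Quotient.mk_surjective (R.aug (Finsupp.single x0 1))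
    rw [← hb, quot_smul, Ideal.Quotient.eq_zero_iff_mem]
    exact I.mul_mem_right b ht
  obtain ⟨w, hw⟩ := (R.exact_aug v).mp haug
  have h1 : constantCoeff ((R.d 0 w) x0) = 0 := R.cc_coord_d _ _ _
  rw [hw, hv] at h1
  rw [Finsupp.smul_apply, Finsupp.single_eq_same, smul_eq_mul, mul_one] at h1
  exact hcc h1

end MinimalGradedFreeResolutionOfQuotient

section KEY
variable {K : Type*} [Field K] {σ τ : Type*}
variable {I : Ideal (MvPolynomial σ K)} {J : Ideal (MvPolynomial τ K)}
variable (R₁ : MinimalGradedFreeResolutionOfQuotient K σ I)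
variable (R₂ : MinimalGradedFreeResolutionOfQuotient K τ J)
variable (Φ : MvPolynomial σ K →+* MvPolynomial τ K)

/-- image of `d₁`-coefficients combination of a family. -/
noncomputable def zmap (i : ℕ) (f : Fin (R₁.rk i) → (Fin (R₂.rk i) →₀ MvPolynomial τ K))
    (x : Fin (R₁.rk (i+1))) : Fin (R₂.rk i) →₀ MvPolynomial τ K :=
  ∑ y, Φ ((R₁.d i (Finsupp.single x 1)) y) • f y

/-- gradedness of a comparison family. -/
def GrP (i : ℕ) (f : Fin (R₁.rk i) → (Fin (R₂.rk i) →₀ MvPolynomial τ K)) : Prop :=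
  ∀ x x', ((f x) x').IsHomogeneous (R₁.deg i x - R₂.deg i x') ∧
    (R₁.deg i x < R₂.deg i x' → (f x) x' = 0)


theorem d_zmap (i : ℕ) (f : Fin (R₁.rk i) → (Fin (R₂.rk i) →₀ MvPolynomial τ K))
    (g : Fin (R₁.rk (i+1)) → (Fin (R₂.rk (i+1)) →₀ MvPolynomial τ K))
    (hL : ∀ x, R₂.d i (g x) = zmap R₁ R₂ Φ i f x) (x : Fin (R₁.rk (i+2))) :
    R₂.d i (zmap R₁ R₂ Φ (i+1) g x) = 0 := by
  rw [zmap, map_sum]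
  have step1 : ∀ y, R₂.d i (Φ ((R₁.d (i+1) (Finsupp.single x 1)) y) • g y)
      = Φ ((R₁.d (i+1) (Finsupp.single x 1)) y) • zmap R₁ R₂ Φ i f y := by
    intro y; rw [map_smul, hL y]
  rw [Finset.sum_congr rfl fun y _ => step1 y]
  have step2 : ∀ y, Φ ((R₁.d (i+1) (Finsupp.single x 1)) y) • zmap R₁ R₂ Φ i f y
      = ∑ w, Φ (((R₁.d (i+1) (Finsupp.single x 1)) y) * ((R₁.d i (Finsupp.single y 1)) w)) • f w := by
    intro y
    rw [zmap, Finset.smul_sum]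
    exact Finset.sum_congr rfl fun w _ => by rw [smul_smul, ← map_mul]
  rw [Finset.sum_congr rfl fun y _ => step2 y, Finset.sum_comm]
  have step3 : ∀ w, (∑ y, Φ (((R₁.d (i+1) (Finsupp.single x 1)) y) * ((R₁.d i (Finsupp.single y 1)) w)) • f w) = 0 := by
    intro w
    rw [← Finset.sum_smul, ← map_sum, ← R₁.coord_d i (R₁.d (i+1) (Finsupp.single x 1)) w,
      R₁.d_d]
    simp
  exact Finset.sum_eq_zero fun w _ => step3 w

theorem exists_graded_preimage (i : ℕ) (n : ℕ)
    (z : Fin (R₂.rk i) →₀ MvPolynomial τ K)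
    (hz : ∀ y', (z y').IsHomogeneous (n - R₂.deg i y') ∧ (n < R₂.deg i y' → z y' = 0))
    (v : Fin (R₂.rk (i+1)) →₀ MvPolynomial τ K) (hv : R₂.d i v = z) :
    ∃ g : Fin (R₂.rk (i+1)) →₀ MvPolynomial τ K,
      (∀ x', (g x').IsHomogeneous (n - R₂.deg (i+1) x') ∧ (n < R₂.deg (i+1) x' → g x' = 0)) ∧
      R₂.d i g = z := by
  classical
  set g : Fin (R₂.rk (i+1)) →₀ MvPolynomial τ K :=
    Finsupp.equivFunOnFinite.symm (fun x' => if R₂.deg (i+1) x' ≤ n then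
      MvPolynomial.homogeneousComponent (n - R₂.deg (i+1) x') (v x') else 0) with hg
  have hgapp : ∀ x', g x' = if R₂.deg (i+1) x' ≤ n then
      MvPolynomial.homogeneousComponent (n - R₂.deg (i+1) x') (v x') else 0 := by
    intro x'; rw [hg]; rfl
  refine ⟨g, fun x' => ?_, ?_⟩
  · rw [hgapp x']
    by_cases hle : R₂.deg (i+1) x' ≤ n
    · rw [if_pos hle]
      exact ⟨MvPolynomial.homogeneousComponent_isHomogeneous _ _, fun h => absurd h (by omega)⟩
    · rw [if_neg hle]
      exact ⟨MvPolynomial.isHomogeneous_zero _ _ _, fun _ => rfl⟩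
  · refine Finsupp.ext fun y' => ?_
    rw [R₂.coord_d]
    by_cases hb : R₂.deg i y' ≤ n
    · have h1 : ∑ x', g x' * ((R₂.d i (Finsupp.single x' 1)) y')
          = MvPolynomial.homogeneousComponent (n - R₂.deg i y') ((R₂.d i v) y') := by
        rw [R₂.coord_d, map_sum]
        refine Finset.sum_congr rfl fun x' _ => ?_
        rcases le_or_gt (R₂.deg i y') (R₂.deg (i+1) x') with hba | hba
        · have he := (R₂.d_homogeneous i x' y').1
          rw [hc_mul he, hgapp x']
          by_cases han : R₂.deg (i+1) x' ≤ n
          · have c1 : R₂.deg (i+1) x' - R₂.deg i y' ≤ n - R₂.deg i y' := by omega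
            have c2 : n - R₂.deg i y' - (R₂.deg (i+1) x' - R₂.deg i y') = n - R₂.deg (i+1) x' := by omega
            rw [if_pos han, if_pos c1, c2]
          · have c1 : ¬(R₂.deg (i+1) x' - R₂.deg i y' ≤ n - R₂.deg i y') := by omega
            rw [if_neg han, if_neg c1, zero_mul]
        · rw [(R₂.d_homogeneous i x' y').2 hba, mul_zero, mul_zero, map_zero]
      rw [h1, hv]
      rw [hc_of_homog (hz y').1, if_pos rfl]
    · rw [(hz y').2 (by omega)]
      refine Finset.sum_eq_zero fun x' _ => ?_
      by_cases han : R₂.deg (i+1) x' ≤ n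
      · rw [(R₂.d_homogeneous i x' y').2 (by omega), mul_zero]
      · rw [hgapp x', if_neg han, zero_mul]


theorem zmap_grading
    (hΦhom : ∀ (r : MvPolynomial σ K) (n : ℕ), r.IsHomogeneous n → (Φ r).IsHomogeneous n)
    (i : ℕ) (f : Fin (R₁.rk i) → (Fin (R₂.rk i) →₀ MvPolynomial τ K))
    (hGr : GrP R₁ R₂ i f) (x : Fin (R₁.rk (i+1))) :
    ∀ y', ((zmap R₁ R₂ Φ i f x) y').IsHomogeneous (R₁.deg (i+1) x - R₂.deg i y') ∧
      (R₁.deg (i+1) x < R₂.deg i y' → (zmap R₁ R₂ Φ i f x) y' = 0) := by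
  intro y'
  have happ : (zmap R₁ R₂ Φ i f x) y'
      = ∑ y, Φ ((R₁.d i (Finsupp.single x 1)) y) * (f y y') := by
    rw [zmap, coord_sum]
  constructor
  · rw [happ]
    apply MvPolynomial.IsHomogeneous.sum
    intro y _
    rcases le_or_gt (R₁.deg i y) (R₁.deg (i+1) x) with h1 | h1
    · rcases le_or_gt (R₂.deg i y') (R₁.deg i y) with h2 | h2
      · have hhe := hΦhom _ _ (R₁.d_homogeneous i x y).1
        have hdeg : R₁.deg (i+1) x - R₂.deg i y'
            = (R₁.deg (i+1) x - R₁.deg i y) + (R₁.deg i y - R₂.deg i y') := by omega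
        rw [hdeg]
        exact hhe.mul ((hGr y y').1)
      · rw [(hGr y y').2 h2, mul_zero]
        exact MvPolynomial.isHomogeneous_zero _ _ _
    · rw [(R₁.d_homogeneous i x y).2 h1, map_zero, zero_mul]
      exact MvPolynomial.isHomogeneous_zero _ _ _
  · intro hlt
    rw [happ]
    refine Finset.sum_eq_zero fun y _ => ?_
    rcases le_or_gt (R₁.deg i y) (R₁.deg (i+1) x) with h1 | h1
    · rw [(hGr y y').2 (by omega), mul_zero]
    · rw [(R₁.d_homogeneous i x y).2 h1, map_zero, zero_mul]

theorem exists_Theta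
    (hΦI : ∀ r ∈ I, Φ r ∈ J)
    (hΦhom : ∀ (r : MvPolynomial σ K) (n : ℕ), r.IsHomogeneous n → (Φ r).IsHomogeneous n)
    (hJhom : ∀ r ∈ J, ∀ n, MvPolynomial.homogeneousComponent n r ∈ J)
    (p : Fin (R₁.rk 0) → MvPolynomial σ K)
    (hp : ∀ x, (p x).IsHomogeneous (R₁.deg 0 x))
    (hpmk : ∀ x, Ideal.Quotient.mk I (p x) = R₁.aug (Finsupp.single x 1))
    (q : Fin (R₂.rk 0) → MvPolynomial τ K)
    (hq : ∀ x', (q x').IsHomogeneous (R₂.deg 0 x'))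
    (hqmk : ∀ x', Ideal.Quotient.mk J (q x') = R₂.aug (Finsupp.single x' 1)) :
    ∃ Θ : ∀ i, Fin (R₁.rk i) → (Fin (R₂.rk i) →₀ MvPolynomial τ K),
      (∀ x, R₂.aug (Θ 0 x) = Ideal.Quotient.mk J (Φ (p x))) ∧
      (∀ i, GrP R₁ R₂ i (Θ i)) ∧
      (∀ i x, R₂.d i (Θ (i+1) x) = zmap R₁ R₂ Φ i (Θ i) x) := by
  classical
  have augRep₁ : ∀ v : Fin (R₁.rk 0) →₀ MvPolynomial σ K,
      R₁.aug v = Ideal.Quotient.mk I (∑ y, v y * p y) := by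
    intro v
    rw [lin_eq_sum R₁.aug v, map_sum]
    exact Finset.sum_congr rfl fun y _ => by rw [← hpmk, quot_smul]
  have augRep₂ : ∀ v : Fin (R₂.rk 0) →₀ MvPolynomial τ K,
      R₂.aug v = Ideal.Quotient.mk J (∑ y, v y * q y) := by
    intro v
    rw [lin_eq_sum R₂.aug v, map_sum]
    exact Finset.sum_congr rfl fun y _ => by rw [← hqmk, quot_smul]
  have hbase : ∀ x : Fin (R₁.rk 0), ∃ w : Fin (R₂.rk 0) →₀ MvPolynomial τ K,
      (∀ x', (w x').IsHomogeneous (R₁.deg 0 x - R₂.deg 0 x') ∧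
        (R₁.deg 0 x < R₂.deg 0 x' → w x' = 0)) ∧
      R₂.aug w = Ideal.Quotient.mk J (Φ (p x)) := by
    intro x
    obtain ⟨v, hv⟩ := R₂.aug_surjective (Ideal.Quotient.mk J (Φ (p x)))
    set n := R₁.deg 0 x with hn
    set w : Fin (R₂.rk 0) →₀ MvPolynomial τ K :=
      Finsupp.equivFunOnFinite.symm (fun x' => if R₂.deg 0 x' ≤ n then
        MvPolynomial.homogeneousComponent (n - R₂.deg 0 x') (v x') else 0) with hwdef
    have hwapp : ∀ x', w x' = if R₂.deg 0 x' ≤ n then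
        MvPolynomial.homogeneousComponent (n - R₂.deg 0 x') (v x') else 0 := fun x' => rfl
    have hgap : (∑ x', v x' * q x') - Φ (p x) ∈ J := by
      have h := hv
      rw [augRep₂] at h
      exact (Ideal.Quotient.mk_eq_mk_iff_sub_mem _ _).mp h
    have hw : ∑ x', w x' * q x'
        = MvPolynomial.homogeneousComponent n (∑ x', v x' * q x') := by
      rw [map_sum]
      refine Finset.sum_congr rfl fun x' _ => ?_
      rw [hc_mul (hq x'), hwapp x']
      by_cases hle : R₂.deg 0 x' ≤ n
      · rw [if_pos hle, if_pos hle]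
      · rw [if_neg hle, if_neg hle, zero_mul]
    refine ⟨w, fun x' => ?_, ?_⟩
    · rw [hwapp x']
      by_cases hle : R₂.deg 0 x' ≤ n
      · rw [if_pos hle]
        exact ⟨MvPolynomial.homogeneousComponent_isHomogeneous _ _,
          fun h => absurd h (by omega)⟩
      · rw [if_neg hle]
        exact ⟨MvPolynomial.isHomogeneous_zero _ _ _, fun _ => rfl⟩
    · rw [augRep₂, Ideal.Quotient.mk_eq_mk_iff_sub_mem, hw]
      have hΦp : MvPolynomial.homogeneousComponent n (Φ (p x)) = Φ (p x) := by
        rw [hc_of_homog (hΦhom _ _ (hp x)), if_pos rfl]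
      have heq : MvPolynomial.homogeneousComponent n (∑ x', v x' * q x') - Φ (p x)
          = MvPolynomial.homogeneousComponent n ((∑ x', v x' * q x') - Φ (p x)) := by
        rw [map_sub, hΦp]
      rw [heq]
      exact hJhom _ hgap n
  choose f0 hf0gr hf0aug using hbase
  have augZ : ∀ (f : Fin (R₁.rk 0) → (Fin (R₂.rk 0) →₀ MvPolynomial τ K)),
      (∀ x, R₂.aug (f x) = Ideal.Quotient.mk J (Φ (p x))) →
      ∀ x : Fin (R₁.rk 1), R₂.aug (zmap R₁ R₂ Φ 0 f x) = 0 := by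
    intro f hf x
    rw [zmap, map_sum]
    have hterm : ∀ y, R₂.aug (Φ ((R₁.d 0 (Finsupp.single x 1)) y) • f y)
        = Ideal.Quotient.mk J (Φ (((R₁.d 0 (Finsupp.single x 1)) y) * p y)) := by
      intro y
      rw [map_smul, hf y, quot_smul, ← map_mul]
    rw [Finset.sum_congr rfl fun y _ => hterm y, ← map_sum, ← map_sum,
      Ideal.Quotient.eq_zero_iff_mem]
    apply hΦI
    have h0 : Ideal.Quotient.mk I (∑ y, ((R₁.d 0 (Finsupp.single x 1)) y) * p y) = 0 := by
      rw [← augRep₁, R₁.aug_d]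
    rwa [Ideal.Quotient.eq_zero_iff_mem] at h0
  obtain ⟨Θ, hΘ0, hΘs⟩ := nat_rec_exists
    (C := fun i => Fin (R₁.rk i) → (Fin (R₂.rk i) →₀ MvPolynomial τ K))
    (Inv := fun i => match i with
      | 0 => fun f => GrP R₁ R₂ 0 f ∧ (∀ x, ∃ w, R₂.d 0 w = zmap R₁ R₂ Φ 0 f x) ∧
          (∀ x, R₂.aug (f x) = Ideal.Quotient.mk J (Φ (p x)))
      | (k+1) => fun f => GrP R₁ R₂ (k+1) f ∧
          (∀ x, ∃ w, R₂.d (k+1) w = zmap R₁ R₂ Φ (k+1) f x))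
    (L := fun i f g => ∀ x, R₂.d i (g x) = zmap R₁ R₂ Φ i f x)
    ⟨f0, fun x => hf0gr x, fun x => (R₂.exact_aug _).mp (augZ f0 hf0aug x), hf0aug⟩
    (by
      intro i f hf
      have hGr : GrP R₁ R₂ i f := by
        cases i with
        | zero => exact hf.1
        | succ k => exact hf.1
      have hReady : ∀ x, ∃ w, R₂.d i w = zmap R₁ R₂ Φ i f x := by
        cases i with
        | zero => exact hf.2.1
        | succ k => exact hf.2
      have hg : ∀ x : Fin (R₁.rk (i+1)), ∃ gx : Fin (R₂.rk (i+1)) →₀ MvPolynomial τ K,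
          (∀ x', (gx x').IsHomogeneous (R₁.deg (i+1) x - R₂.deg (i+1) x') ∧
            (R₁.deg (i+1) x < R₂.deg (i+1) x' → gx x' = 0)) ∧
          R₂.d i gx = zmap R₁ R₂ Φ i f x := by
        intro x
        obtain ⟨v, hv⟩ := hReady x
        exact exists_graded_preimage R₂ i (R₁.deg (i+1) x) _
          (zmap_grading R₁ R₂ Φ hΦhom i f hGr x) v hv
      choose g hggr hgd using hg
      exact ⟨g, ⟨fun x x' => hggr x x',
        fun x => (R₂.exact_d i _).mp (d_zmap R₁ R₂ Φ i f g hgd x)⟩, hgd⟩)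
  refine ⟨Θ, hΘ0.2.2, fun i => ?_, fun i x => (hΘs i).2 x⟩
  cases i with
  | zero => exact hΘ0.1
  | succ k => exact (hΘs k).1.1

theorem key_betti_le
    (Ψ : MvPolynomial τ K →+* MvPolynomial σ K)
    (hΦI : ∀ r ∈ I, Φ r ∈ J)
    (hΦhom : ∀ (r : MvPolynomial σ K) (n : ℕ), r.IsHomogeneous n → (Φ r).IsHomogeneous n)
    (hJhom : ∀ r ∈ J, ∀ n, MvPolynomial.homogeneousComponent n r ∈ J)
    (hΨJ : ∀ r ∈ J, Ψ r ∈ I)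
    (hΨhom : ∀ (r : MvPolynomial τ K) (n : ℕ), r.IsHomogeneous n → (Ψ r).IsHomogeneous n)
    (hIhom : ∀ r ∈ I, ∀ n, MvPolynomial.homogeneousComponent n r ∈ I)
    (hΨΦ : ∀ r, Ψ (Φ r) = r)
    (hΨcc : ∀ r, MvPolynomial.constantCoeff (Ψ r) = MvPolynomial.constantCoeff r)
    (i j : ℕ) (hb : R₁.betti i j ≠ 0) : R₂.betti i j ≠ 0 := by
  classical
  choose p hp hpmk using R₁.aug_homogeneous
  choose q hq hqmk using R₂.aug_homogeneous
  obtain ⟨Θ, hΘaug, hΘgr, hΘd⟩ := exists_Theta R₁ R₂ Φ hΦI hΦhom hJhom p hp hpmk q hq hqmk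
  obtain ⟨H, hHaug, _, hHd⟩ := exists_Theta R₂ R₁ Ψ hΨJ hΨhom hIhom q hq hqmk p hp hpmk
  set G : ∀ k, Fin (R₁.rk k) → (Fin (R₁.rk k) →₀ MvPolynomial σ K) :=
    fun k x => ∑ x', Ψ ((Θ k x) x') • H k x' with hGdef
  have hGapp : ∀ k x, G k x = ∑ x', Ψ ((Θ k x) x') • H k x' := fun k x => rfl
  have augRep₁ : ∀ v : Fin (R₁.rk 0) →₀ MvPolynomial σ K,
      R₁.aug v = Ideal.Quotient.mk I (∑ y, v y * p y) := by
    intro v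
    rw [lin_eq_sum R₁.aug v, map_sum]
    exact Finset.sum_congr rfl fun y _ => by rw [← hpmk, quot_smul]
  have augRep₂ : ∀ v : Fin (R₂.rk 0) →₀ MvPolynomial τ K,
      R₂.aug v = Ideal.Quotient.mk J (∑ y, v y * q y) := by
    intro v
    rw [lin_eq_sum R₂.aug v, map_sum]
    exact Finset.sum_congr rfl fun y _ => by rw [← hqmk, quot_smul]
  -- G lifts the identity at level 0
  have hG0 : ∀ x, R₁.aug (G 0 x) = R₁.aug (Finsupp.single x 1) := by
    intro x
    have hterm : ∀ x', R₁.aug (Ψ ((Θ 0 x) x') • H 0 x')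
        = Ideal.Quotient.mk I (Ψ ((Θ 0 x) x' * q x')) := by
      intro x'
      rw [map_smul, hHaug x', quot_smul, ← map_mul]
    have h1 : R₁.aug (G 0 x) = Ideal.Quotient.mk I (Ψ (∑ x', (Θ 0 x) x' * q x')) := by
      rw [hGapp, map_sum, Finset.sum_congr rfl fun x' _ => hterm x', ← map_sum, ← map_sum]
    have h2 : Ideal.Quotient.mk J (∑ x', (Θ 0 x) x' * q x')
        = Ideal.Quotient.mk J (Φ (p x)) := by
      rw [← augRep₂]
      exact hΘaug x
    have h3 : (∑ x', (Θ 0 x) x' * q x') - Φ (p x) ∈ J :=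
      (Ideal.Quotient.mk_eq_mk_iff_sub_mem _ _).mp h2
    have h4 : Ψ (∑ x', (Θ 0 x) x' * q x') - p x
        = Ψ ((∑ x', (Θ 0 x) x' * q x') - Φ (p x)) := by
      rw [map_sub, hΨΦ]
    rw [h1, ← hpmk x, Ideal.Quotient.mk_eq_mk_iff_sub_mem, h4]
    exact hΨJ _ h3
  -- G is a chain self-map
  have hGd : ∀ k x, R₁.d k (G (k+1) x)
      = ∑ y, ((R₁.d k (Finsupp.single x 1)) y) • G k y := by
    intro k x
    calc R₁.d k (G (k+1) x)
        = ∑ x', Ψ ((Θ (k+1) x) x') • R₁.d k (H (k+1) x') := by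
          rw [hGapp, map_sum]
          exact Finset.sum_congr rfl fun x' _ => by rw [map_smul]
      _ = ∑ x', Ψ ((Θ (k+1) x) x')
            • ∑ y', Ψ ((R₂.d k (Finsupp.single x' 1)) y') • H k y' := by
          refine Finset.sum_congr rfl fun x' _ => ?_
          rw [hHd k x', zmap]
      _ = ∑ y', (∑ x', Ψ ((Θ (k+1) x) x') * Ψ ((R₂.d k (Finsupp.single x' 1)) y'))
            • H k y' := (double_swap _ _ _).symm
      _ = ∑ y', Ψ ((R₂.d k (Θ (k+1) x)) y') • H k y' := by
          refine Finset.sum_congr rfl fun y' _ => ?_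
          rw [R₂.coord_d k (Θ (k+1) x) y', map_sum]
          congr 1
          exact Finset.sum_congr rfl fun x' _ => by rw [map_mul]
      _ = ∑ y', Ψ ((zmap R₁ R₂ Φ k (Θ k) x) y') • H k y' := by
          rw [hΘd k x]
      _ = ∑ y', (∑ y, ((R₁.d k (Finsupp.single x 1)) y) * Ψ ((Θ k y) y')) • H k y' := by
          refine Finset.sum_congr rfl fun y' _ => ?_
          rw [zmap, coord_sum, map_sum]
          congr 1
          exact Finset.sum_congr rfl fun y _ => by rw [map_mul, hΨΦ]
      _ = ∑ y, ((R₁.d k (Finsupp.single x 1)) y) • G k y := by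
          rw [double_swap]
  -- homotopy family
  obtain ⟨s, hs0, hss⟩ := nat_rec_exists
    (C := fun k => Fin (R₁.rk k) → (Fin (R₁.rk (k+1)) →₀ MvPolynomial σ K))
    (Inv := fun k => match k with
      | 0 => fun sf => (∀ x : Fin (R₁.rk 1),
            R₁.d 0 (∑ y, ((R₁.d 0 (Finsupp.single x 1)) y) • sf y)
              = ∑ y, ((R₁.d 0 (Finsupp.single x 1)) y) • (G 0 y - Finsupp.single y 1)) ∧
          (∀ x, R₁.d 0 (sf x) = G 0 x - Finsupp.single x 1)
      | (k+1) => fun sf => ∀ x : Fin (R₁.rk (k+2)),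
            R₁.d (k+1) (∑ y, ((R₁.d (k+1) (Finsupp.single x 1)) y) • sf y)
              = ∑ y, ((R₁.d (k+1) (Finsupp.single x 1)) y) • (G (k+1) y - Finsupp.single y 1))
    (L := fun k sf sf' => ∀ x, R₁.d (k+1) (sf' x)
        = G (k+1) x - Finsupp.single x 1 - ∑ y, ((R₁.d k (Finsupp.single x 1)) y) • sf y)
    (by
      have hbase : ∀ x : Fin (R₁.rk 0), ∃ w, R₁.d 0 w = G 0 x - Finsupp.single x 1 := by
        intro x
        apply (R₁.exact_aug _).mp
        rw [map_sub, hG0 x, sub_self]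
      choose sf hsf using hbase
      refine ⟨sf, ?_, hsf⟩
      intro x
      rw [map_sum]
      exact Finset.sum_congr rfl fun y _ => by rw [map_smul, hsf y])
    (by
      intro k sf hInv
      have hInv' : ∀ x : Fin (R₁.rk (k+1)),
          R₁.d k (∑ y, ((R₁.d k (Finsupp.single x 1)) y) • sf y)
            = ∑ y, ((R₁.d k (Finsupp.single x 1)) y) • (G k y - Finsupp.single y 1) := by
        cases k with
        | zero => exact hInv.1
        | succ m => exact hInv
      have hstep : ∀ x : Fin (R₁.rk (k+1)), ∃ w, R₁.d (k+1) w
          = G (k+1) x - Finsupp.single x 1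
            - ∑ y, ((R₁.d k (Finsupp.single x 1)) y) • sf y := by
        intro x
        apply (R₁.exact_d k _).mp
        rw [map_sub, map_sub, hGd k x, hInv' x]
        have hexp : ∑ y, ((R₁.d k (Finsupp.single x 1)) y) • (G k y - Finsupp.single y 1)
            = (∑ y, ((R₁.d k (Finsupp.single x 1)) y) • G k y)
              - ∑ y, ((R₁.d k (Finsupp.single x 1)) y)
                  • Finsupp.single y (1 : MvPolynomial σ K) := by
          rw [← Finset.sum_sub_distrib]
          exact Finset.sum_congr rfl fun y _ => smul_sub _ _ _
        rw [hexp, sum_single_eq]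
        abel
      choose sf' hsf' using hstep
      refine ⟨sf', ?_, hsf'⟩
      intro x
      rw [map_sum]
      have h1 : ∀ y, R₁.d (k+1) (((R₁.d (k+1) (Finsupp.single x 1)) y) • sf' y)
          = ((R₁.d (k+1) (Finsupp.single x 1)) y) • (G (k+1) y - Finsupp.single y 1)
            - ((R₁.d (k+1) (Finsupp.single x 1)) y)
                • ∑ z, ((R₁.d k (Finsupp.single y 1)) z) • sf z := by
        intro y
        rw [map_smul, hsf' y, smul_sub]
      rw [Finset.sum_congr rfl fun y _ => h1 y, Finset.sum_sub_distrib]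
      have h2 : ∑ y, ((R₁.d (k+1) (Finsupp.single x 1)) y)
          • ∑ z, ((R₁.d k (Finsupp.single y 1)) z) • sf z = 0 := by
        rw [← double_swap (fun y => ((R₁.d (k+1) (Finsupp.single x 1)) y))
          (fun y z => ((R₁.d k (Finsupp.single y 1)) z)) sf]
        refine Finset.sum_eq_zero fun z _ => ?_
        rw [← R₁.coord_d k (R₁.d (k+1) (Finsupp.single x 1)) z, R₁.d_d]
        simp
      rw [h2, sub_zero])
  -- constant coefficient of the diagonal of G is 1
  have hcc : ∀ k x, MvPolynomial.constantCoeff ((G k x) x) = 1 := by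
    intro k x
    cases k with
    | zero =>
      have h := hs0.2 x
      have hGx : G 0 x = Finsupp.single x 1 + R₁.d 0 (s 0 x) := by
        rw [h]; abel
      rw [hGx, Finsupp.add_apply, map_add, Finsupp.single_eq_same, map_one,
        R₁.cc_coord_d, add_zero]
    | succ k =>
      have h := (hss k).2 x
      have hGx : G (k+1) x = Finsupp.single x 1 + R₁.d (k+1) (s (k+1) x)
          + ∑ y, ((R₁.d k (Finsupp.single x 1)) y) • s k y := by
        rw [h]; abel
      have h3 : MvPolynomial.constantCoeff
          ((∑ y, ((R₁.d k (Finsupp.single x 1)) y) • s k y) x) = 0 := by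
        rw [coord_sum, map_sum]
        refine Finset.sum_eq_zero fun y _ => ?_
        rw [map_mul]
        simp only [MvPolynomial.constantCoeff_eq]
        rw [R₁.minimal k x y, zero_mul]
      rw [hGx, Finsupp.add_apply, Finsupp.add_apply, map_add, map_add,
        Finsupp.single_eq_same, map_one, R₁.cc_coord_d, h3, add_zero, add_zero]
  -- extraction
  rw [MinimalGradedFreeResolutionOfQuotient.betti] at hb ⊢
  obtain ⟨x₀, hx₀mem⟩ := Finset.card_pos.mp (Nat.pos_of_ne_zero hb)
  have hx₀ : R₁.deg i x₀ = j := (Finset.mem_filter.mp hx₀mem).2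
  have h1 : MvPolynomial.constantCoeff ((G i x₀) x₀) = 1 := hcc i x₀
  have h2 : (G i x₀) x₀ = ∑ x', Ψ ((Θ i x₀) x') * ((H i x') x₀) := by
    rw [hGapp, coord_sum]
  rw [h2, map_sum] at h1
  have h3 : ∃ x', MvPolynomial.constantCoeff (Ψ ((Θ i x₀) x') * ((H i x') x₀)) ≠ 0 := by
    by_contra hall
    push_neg at hall
    rw [Finset.sum_eq_zero (fun x' _ => hall x')] at h1
    exact one_ne_zero h1.symm
  obtain ⟨x', hx'⟩ := h3
  have h4 : MvPolynomial.constantCoeff ((Θ i x₀) x') ≠ 0 := by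
    intro h0
    apply hx'
    rw [map_mul, hΨcc, h0, zero_mul]
  have h6 : ¬ (R₁.deg i x₀ < R₂.deg i x') := by
    intro hlt
    apply h4
    rw [(hΘgr i x₀ x').2 hlt, map_zero]
  have h8 := (hΘgr i x₀ x').1 (show MvPolynomial.coeff 0 ((Θ i x₀) x') ≠ 0 by
    simp only [MvPolynomial.constantCoeff_eq] at h4; exact h4)
  simp only [map_zero] at h8
  have h9 : R₂.deg i x' = j := by omega
  exact Nat.pos_iff_ne_zero.mp (Finset.card_pos.mpr
    ⟨x', Finset.mem_filter.mpr ⟨Finset.mem_univ _, h9⟩⟩)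

end KEY

section TORIC
variable {K : Type*} [Field K]

theorem degree_symm {μ : Type*} [Fintype μ] (f : μ → ℕ) :
    (Finsupp.equivFunOnFinite.symm f).degree = ∑ x, f x := by
  show ∑ i ∈ (Finsupp.equivFunOnFinite.symm f).support, (Finsupp.equivFunOnFinite.symm f) i = ∑ x, f x
  rw [Finset.sum_subset (Finset.subset_univ _)]
  · exact Finset.sum_congr rfl fun x _ => rfl
  · intro x _ hx
    simpa using Finsupp.notMem_support_iff.mp hx

theorem toricHom_X {σ : Type*} [Fintype σ] (A : Set (σ → ℕ)) (u : A) :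
    toricHom K A (X u) = monomial (Finsupp.equivFunOnFinite.symm u.1) (1 : K) :=
  aeval_X _ _

theorem mem_toricIdeal {σ : Type*} [Fintype σ] (A : Set (σ → ℕ)) (r : MvPolynomial A K) :
    r ∈ toricIdeal K A ↔ toricHom K A r = 0 := Iff.rfl

theorem toricHom_homog {σ : Type*} [Fintype σ] (A : Set (σ → ℕ)) (dg : ℕ)
    (hd : ∀ u ∈ A, ∑ j, u j = dg) (r : MvPolynomial A K) (k : ℕ)
    (hr : r.IsHomogeneous k) : (toricHom K A r).IsHomogeneous (dg * k) := by
  rw [toricHom, aeval_def]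
  apply hr.eval₂
  · intro c
    exact isHomogeneous_C _ _
  · intro u
    apply isHomogeneous_monomial
    rw [degree_symm]
    exact hd u.1 u.2

theorem toric_hc_mem {σ : Type*} [Fintype σ] (A : Set (σ → ℕ)) (dg : ℕ) (hdg : 1 ≤ dg)
    (hd : ∀ u ∈ A, ∑ j, u j = dg) (r : MvPolynomial A K) (hr : r ∈ toricIdeal K A) (m : ℕ) :
    homogeneousComponent m r ∈ toricIdeal K A := by
  rw [mem_toricIdeal] at hr ⊢
  have key : toricHom K A (homogeneousComponent m r)
      = homogeneousComponent (dg * m) (toricHom K A r) := by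
    conv_rhs => rw [← sum_homogeneousComponent r]
    rw [map_sum, map_sum]
    have hterm : ∀ k, homogeneousComponent (dg * m) (toricHom K A (homogeneousComponent k r))
        = if dg * m = dg * k then toricHom K A (homogeneousComponent k r) else 0 := fun k =>
      hc_of_homog (toricHom_homog A dg hd _ k (homogeneousComponent_isHomogeneous k r))
    rw [Finset.sum_congr rfl fun k _ => hterm k]
    by_cases hm : m ≤ r.totalDegree
    · rw [Finset.sum_eq_single m]
      · rw [if_pos rfl]
      · intro b _ hb
        rw [if_neg (fun h => hb (Nat.eq_of_mul_eq_mul_left hdg h).symm)]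
      · intro hmem
        simp only [Finset.mem_range] at hmem
        omega
    · rw [homogeneousComponent_eq_zero _ r (by omega), map_zero]
      refine (Finset.sum_eq_zero fun b hmem => ?_).symm
      simp only [Finset.mem_range] at hmem
      rw [if_neg (fun h => by have := Nat.eq_of_mul_eq_mul_left hdg h; omega)]
  rw [key, hr, map_zero]

variable {n : ℕ} {α : Fin n → ℕ}

def embMap (α : Fin n → ℕ) (hα : ∀ i, 0 < α i) : Fin n → (i : Fin n) × Fin (α i) :=
  fun i => ⟨i, ⟨0, hα i⟩⟩

theorem embMap_inj (hα : ∀ i, 0 < α i) : Function.Injective (embMap α hα) :=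
  fun a b h => congrArg Sigma.fst h

def fcFun (α : Fin n → ℕ) (hα : ∀ i, 0 < α i) (u : Fin n → ℕ) :
    ((i : Fin n) × Fin (α i)) → ℕ :=
  fun x => if x.2 = ⟨0, hα x.1⟩ then u x.1 else 0

theorem pi0_fc (hα : ∀ i, 0 < α i) (u : Fin n → ℕ) : pi0 α (fcFun α hα u) = u := by
  funext i
  rw [pi0]
  simp only [fcFun]
  rw [Finset.sum_ite_eq' Finset.univ (⟨0, hα i⟩ : Fin (α i))]
  rw [if_pos (Finset.mem_univ _)]

def jmap (α : Fin n → ℕ) (hα : ∀ i, 0 < α i) (A : Set (Fin n → ℕ)) :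
    A → ↥(expandSet α A) :=
  fun u => ⟨fcFun α hα u.1, show pi0 α (fcFun α hα u.1) ∈ A by rw [pi0_fc]; exact u.2⟩

def pmap (α : Fin n → ℕ) (A : Set (Fin n → ℕ)) : ↥(expandSet α A) → A :=
  fun w => ⟨pi0 α w.1, w.2⟩

theorem pmap_jmap (hα : ∀ i, 0 < α i) (A : Set (Fin n → ℕ)) (u : A) :
    pmap α A (jmap α hα A u) = u :=
  Subtype.ext (pi0_fc hα u.1)

theorem symm_fc_eq (hα : ∀ i, 0 < α i) (u : Fin n → ℕ) :
    Finsupp.equivFunOnFinite.symm (fcFun α hα u)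
      = Finsupp.mapDomain (embMap α hα) (Finsupp.equivFunOnFinite.symm u) := by
  ext x
  rcases x with ⟨i, jj⟩
  simp only [Finsupp.coe_equivFunOnFinite_symm]
  by_cases hj : jj = ⟨0, hα i⟩
  · subst hj
    have heq : (⟨i, ⟨0, hα i⟩⟩ : (i : Fin n) × Fin (α i)) = embMap α hα i := rfl
    rw [heq, Finsupp.mapDomain_apply (embMap_inj hα)]
    simp [fcFun, embMap]
  · rw [Finsupp.mapDomain_notin_range]
    · simp only [fcFun]
      rw [if_neg hj]
    · rintro ⟨i', he⟩
      obtain ⟨h1, h2⟩ := Sigma.mk.inj_iff.mp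
        (show (⟨i', ⟨0, hα i'⟩⟩ : (i : Fin n) × Fin (α i)) = ⟨i, jj⟩ from he)
      subst h1
      exact hj (eq_of_heq h2).symm

theorem mapDomain_fst_eq (w : ((i : Fin n) × Fin (α i)) → ℕ) :
    Finsupp.mapDomain Sigma.fst (Finsupp.equivFunOnFinite.symm w)
      = Finsupp.equivFunOnFinite.symm (pi0 α w) := by
  ext i
  simp only [Finsupp.coe_equivFunOnFinite_symm]
  rw [Finsupp.mapDomain, Finsupp.sum_fintype _ _ (fun _ => Finsupp.single_zero _),
    Finsupp.finset_sum_apply]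
  have h1 : ∀ x : (i' : Fin n) × Fin (α i'),
      (Finsupp.single x.1 ((Finsupp.equivFunOnFinite.symm w) x)) i
        = if x.1 = i then w x else 0 := by
    intro x
    rw [Finsupp.single_apply, Finsupp.coe_equivFunOnFinite_symm]
  rw [Finset.sum_congr rfl fun x _ => h1 x, ← Finset.univ_sigma_univ, Finset.sum_sigma]
  have h2 : ∀ i' : Fin n, (∑ j : Fin (α i'), if i' = i then w ⟨i', j⟩ else 0)
      = if i' = i then pi0 α w i' else 0 := by
    intro i'
    by_cases h : i' = i
    · simp [h, pi0]
    · simp [h]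
  rw [Finset.sum_congr rfl fun i' _ => h2 i', Finset.sum_ite_eq' Finset.univ i,
    if_pos (Finset.mem_univ _)]

theorem toricHom_jmap (hα : ∀ i, 0 < α i) (A : Set (Fin n → ℕ)) (r : MvPolynomial A K) :
    toricHom K (expandSet α A) (rename (jmap α hα A) r)
      = rename (embMap α hα) (toricHom K A r) := by
  have h : (toricHom K (expandSet α A)).comp (rename (jmap α hα A))
      = (rename (embMap α hα)).comp (toricHom K A) := by
    apply algHom_ext
    intro u
    simp only [AlgHom.comp_apply, rename_X, toricHom_X, rename_monomial]
    have : (jmap α hα A u).1 = fcFun α hα u.1 := rfl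
    rw [this, symm_fc_eq hα]
  exact DFunLike.congr_fun h r

theorem toricHom_pmap (A : Set (Fin n → ℕ)) (r : MvPolynomial (expandSet α A) K) :
    toricHom K A (rename (pmap α A) r)
      = rename Sigma.fst (toricHom K (expandSet α A) r) := by
  have h : (toricHom K A).comp (rename (pmap α A))
      = (rename (Sigma.fst : ((i : Fin n) × Fin (α i)) → Fin n)).comp
          (toricHom K (expandSet α A)) := by
    apply algHom_ext
    intro w
    simp only [AlgHom.comp_apply, rename_X, toricHom_X, rename_monomial]
    have : (pmap α A w).1 = pi0 α w.1 := rfl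
    rw [this, mapDomain_fst_eq]
  exact DFunLike.congr_fun h r

end TORIC

theorem regularity_toricRing_le_regularity_expansion
    (n : ℕ) (K : Type*) [Field K] (α : Fin n → ℕ) (hα : ∀ i, 0 < α i)
    (A : Set (Fin n → ℕ)) (hne : A.Nonempty) (hfin : A.Finite)
    (hmin : IsAntichain (· ≤ ·) A)
    (dg : ℕ) (hd : ∀ u ∈ A, ∑ j, u j = dg)
    (R₁ : MinimalGradedFreeResolutionOfQuotient K A (toricIdeal K A))
    (R₂ : MinimalGradedFreeResolutionOfQuotient K (expandSet α A)
      (toricIdeal K (expandSet α A))) :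
    ∀ i j, R₁.betti i j ≠ 0 →
      ∃ i' j', R₂.betti i' j' ≠ 0 ∧ (j : ℤ) - (i : ℤ) ≤ (j' : ℤ) - (i' : ℤ) := by
  classical
  intro i j hb
  rcases Nat.eq_zero_or_pos dg with hdg0 | hdgpos
  · exfalso
    obtain ⟨u, hu⟩ := hne
    have hu0 : u = fun _ => 0 := by
      funext k
      have hsum := hd u hu
      rw [hdg0] at hsum
      exact Finset.sum_eq_zero_iff.mp hsum k (Finset.mem_univ k)
    have htI : (X (⟨u, hu⟩ : A) - 1 : MvPolynomial A K) ∈ toricIdeal K A := by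
      rw [mem_toricIdeal, map_sub, map_one, toricHom_X]
      have hsymm : Finsupp.equivFunOnFinite.symm u = (0 : Fin n →₀ ℕ) := by
        ext k1
        rw [Finsupp.coe_equivFunOnFinite_symm, hu0]
        simp
      rw [hsymm, monomial_zero']
      simp
    have htcc : constantCoeff (X (⟨u, hu⟩ : A) - 1 : MvPolynomial A K) ≠ 0 := by
      rw [map_sub, map_one, constantCoeff_X, zero_sub]
      exact neg_ne_zero.mpr one_ne_zero
    rw [MinimalGradedFreeResolutionOfQuotient.betti] at hb
    obtain ⟨x₀, _⟩ := Finset.card_pos.mp (Nat.pos_of_ne_zero hb)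
    exact R₁.degen htI htcc (Nat.pos_iff_ne_zero.mp x₀.pos)
  · refine ⟨i, j, ?_, le_refl _⟩
    have hd' : ∀ w ∈ expandSet α A, ∑ x, w x = dg := by
      intro w hw
      rw [← Finset.univ_sigma_univ, Finset.sum_sigma]
      exact hd (pi0 α w) hw
    refine key_betti_le R₁ R₂ (rename (jmap α hα A)).toRingHom
      (rename (pmap α A)).toRingHom ?_ ?_ ?_ ?_ ?_ ?_ ?_ ?_ i j hb
    · intro r hr
      rw [mem_toricIdeal] at hr ⊢
      show toricHom K (expandSet α A) (rename (jmap α hα A) r) = 0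
      rw [toricHom_jmap hα A r, hr, map_zero]
    · intro r m hr
      exact hr.rename_isHomogeneous
    · exact fun r hr m => toric_hc_mem (expandSet α A) dg hdgpos hd' r hr m
    · intro r hr
      rw [mem_toricIdeal] at hr ⊢
      show toricHom K A (rename (pmap α A) r) = 0
      rw [toricHom_pmap A r, hr, map_zero]
    · intro r m hr
      exact hr.rename_isHomogeneous
    · exact fun r hr m => toric_hc_mem A dg hdgpos hd r hr m
    · intro r
      show rename (pmap α A) (rename (jmap α hα A) r) = r
      rw [rename_rename]
      have hco : (pmap α A) ∘ (jmap α hα A) = id := funext (pmap_jmap hα A)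
      rw [hco, rename_id, AlgHom.id_apply]
    · intro r
      exact constantCoeff_rename _ _
end
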